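/- arXiv:math/0305245 — 4 statements merged into one kernel-verified Lean document; each statement's English description precedes it below -/
import Mathlib

section
/- Every nonzero simple left A_{n,q}-module has ℂ-dimension N^n, and any two nonzero simple left A_{n,q}-modules are isomorphic. -/
/-!
Let `V` be the space of functions on `(ℤ/N)ⁿ`, with `Xᵢ` acting by multiplication by
`x ↦ q ^ xᵢ` and `Yᵢ` by the translation `f ↦ f (· + eᵢ)`; this is a representation
`ρ : A_{n,q} → End V`. Products of powers of the `Xᵢ` give every additive character of `(ℤ/N)ⁿ`,
and characters span all functions, so the image of `ρ` contains every multiplication operator; it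
also contains every translation, and every operator on `V` is a sum of translations composed with
multiplication operators. So `ρ` is onto. Since the ordered monomials `Yᵇ Xᵃ` span `A_{n,q}`, its
dimension is at most `N²ⁿ = dim End V`, and `ρ` is an isomorphism. Hence `A_{n,q}` is simple
Artinian, all its simple modules are isomorphic, in particular to `V`, which has dimension `Nⁿ`.
-/

noncomputable section

namespace Stmt2

/-- The generator `X_i` of the free algebra on `X_1,…,X_n,Y_1,…,Y_n`. -/
abbrev Xg (n : ℕ) (i : Fin n) : FreeAlgebra ℂ (Fin n ⊕ Fin n) :=
  FreeAlgebra.ι ℂ (Sum.inl i)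

/-- The generator `Y_i` of the free algebra on `X_1,…,X_n,Y_1,…,Y_n`. -/
abbrev Yg (n : ℕ) (i : Fin n) : FreeAlgebra ℂ (Fin n ⊕ Fin n) :=
  FreeAlgebra.ι ℂ (Sum.inr i)

/-- The defining relations of the rank-`n` Weyl algebra (noncommutative `n`-torus)
`A_{n,q}` at the parameter `q`, with all generators cyclic of order `N`:
`X_iX_j = X_jX_i`, `Y_iY_j = Y_jY_i`, `X_iY_j = Y_jX_i (i ≠ j)`,
`X_iY_i = q⁻¹·Y_iX_i`, `X_i^N = 1 = Y_i^N`. -/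
inductive Rel (n N : ℕ) (q : ℂ) :
    FreeAlgebra ℂ (Fin n ⊕ Fin n) → FreeAlgebra ℂ (Fin n ⊕ Fin n) → Prop
  | XX (i j : Fin n) : Rel n N q (Xg n i * Xg n j) (Xg n j * Xg n i)
  | YY (i j : Fin n) : Rel n N q (Yg n i * Yg n j) (Yg n j * Yg n i)
  | XYne (i j : Fin n) (h : i ≠ j) : Rel n N q (Xg n i * Yg n j) (Yg n j * Xg n i)
  | XY (i : Fin n) : Rel n N q (Xg n i * Yg n i) (q⁻¹ • (Yg n i * Xg n i))
  | Xord (i : Fin n) : Rel n N q (Xg n i ^ N) 1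
  | Yord (i : Fin n) : Rel n N q (Yg n i ^ N) 1

/-- The rank-`n` Weyl algebra `A_{n,q}` at a root of unity with cyclic generators. -/
abbrev WeylAlg (n N : ℕ) (q : ℂ) := RingQuot (Rel n N q)

end Stmt2

section CyclicPowers

variable {R : Type*} [Monoid R] {N : ℕ} {u : R}

theorem pow_mod_of_pow_eq_one (h : u ^ N = 1) (k : ℕ) : u ^ (k % N) = u ^ k := by
  rw [← pow_mod_orderOf u k, ← pow_mod_orderOf u (k % N),
    Nat.mod_mod_of_dvd _ (orderOf_dvd_of_pow_eq_one h)]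

theorem pow_val_one_of_pow_eq_one (h : u ^ N = 1) : u ^ (1 : ZMod N).val = u := by
  rw [ZMod.val_one_eq_one_mod, pow_mod_of_pow_eq_one h, pow_one]

theorem pow_val_add_of_pow_eq_one [NeZero N] (h : u ^ N = 1) (a b : ZMod N) :
    u ^ (a + b).val = u ^ a.val * u ^ b.val := by
  rw [ZMod.val_add, pow_mod_of_pow_eq_one h, pow_add]

end CyclicPowers

section Monomial

variable {R : Type*} {ι : Type*} [Fintype ι] {N : ℕ}

def zmodMonomial [Monoid R] (u : ι → R) (hu : ∀ i j, Commute (u i) (u j)) (a : ι → ZMod N) :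
    R :=
  Finset.univ.noncommProd (fun i => u i ^ (a i).val) fun i _ j _ _ => (hu i j).pow_pow _ _

section Monoid

variable [Monoid R] (u : ι → R) (hu : ∀ i j, Commute (u i) (u j))

theorem zmodMonomial_zero : zmodMonomial u hu (0 : ι → ZMod N) = 1 :=
  (Finset.noncommProd_eq_pow_card _ _ _ 1 fun i _ => by simp).trans (one_pow _)

variable [DecidableEq ι]

theorem zmodMonomial_eq_pow_mul (a : ι → ZMod N) (i : ι) :
    zmodMonomial u hu a = u i ^ (a i).val *
      (Finset.univ.erase i).noncommProd (fun j => u j ^ (a j).val)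
        fun j _ k _ _ => (hu j k).pow_pow _ _ :=
  (Finset.mul_noncommProd_erase _ (Finset.mem_univ i) _ _).symm

theorem mul_zmodMonomial [NeZero N] (huN : ∀ i, u i ^ N = 1) (i : ι) (a : ι → ZMod N) :
    u i * zmodMonomial u hu a = zmodMonomial u hu (a + Pi.single i 1) := by
  rw [zmodMonomial_eq_pow_mul u hu a i, zmodMonomial_eq_pow_mul u hu _ i, ← mul_assoc]
  congr 1
  · rw [Pi.add_apply, Pi.single_eq_same, pow_val_add_of_pow_eq_one (huN i),
      pow_val_one_of_pow_eq_one (huN i), pow_mul_comm']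
  · refine Finset.noncommProd_congr rfl (fun j hj => ?_) _
    rw [Pi.add_apply, Pi.single_eq_of_ne (Finset.ne_of_mem_erase hj), add_zero]

end Monoid

section Algebra

variable {K : Type*} [CommSemiring K] [Semiring R] [Algebra K R] [DecidableEq ι]

theorem mul_pow_eq_smul_pow_mul {x u : R} {c : K} (h : x * u = c • (u * x)) (k : ℕ) :
    x * u ^ k = c ^ k • (u ^ k * x) := by
  induction k with
  | zero => simp
  | succ k ih =>
    rw [pow_succ, ← mul_assoc, ih, smul_mul_assoc, mul_assoc, h, mul_smul_comm, smul_smul,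
      ← pow_succ, mul_assoc]

theorem mul_zmodMonomial_eq_smul (u : ι → R) (hu : ∀ i j, Commute (u i) (u j)) {x : R} {c : K}
    {i : ι} (hx : ∀ j, j ≠ i → Commute x (u j)) (hxi : x * u i = c • (u i * x))
    (a : ι → ZMod N) : x * zmodMonomial u hu a = c ^ (a i).val • (zmodMonomial u hu a * x) := by
  have hrest := Finset.noncommProd_commute (Finset.univ.erase i) (fun j => u j ^ (a j).val)
    (fun j _ k _ _ => (hu j k).pow_pow _ _) x
    fun j hj => (hx j (Finset.ne_of_mem_erase hj)).pow_right _
  rw [zmodMonomial_eq_pow_mul u hu a i, ← mul_assoc, mul_pow_eq_smul_pow_mul hxi, smul_mul_assoc,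
    mul_assoc, hrest.eq, ← mul_assoc]

theorem span_zmodMonomial_mul_zmodMonomial_eq_top [NeZero N] (x y : ι → R)
    (hx : ∀ i j, Commute (x i) (x j)) (hy : ∀ i j, Commute (y i) (y j))
    (hxN : ∀ i, x i ^ N = 1) (hyN : ∀ i, y i ^ N = 1) (hxy : ∀ i j, i ≠ j → Commute (x i) (y j))
    (c : K) (hxyc : ∀ i, x i * y i = c • (y i * x i))
    (hgen : Algebra.adjoin K (Set.range (Sum.elim x y)) = ⊤) :
    Submodule.span K (Set.range fun p : (ι → ZMod N) × (ι → ZMod N) =>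
      zmodMonomial y hy p.2 * zmodMonomial x hx p.1) = ⊤ := by
  set P := Submodule.span K (Set.range fun p : (ι → ZMod N) × (ι → ZMod N) =>
      zmodMonomial y hy p.2 * zmodMonomial x hx p.1)
  have mem_P (a b : ι → ZMod N) : zmodMonomial y hy b * zmodMonomial x hx a ∈ P :=
    Submodule.subset_span ⟨(a, b), rfl⟩
  have mul_mem_of_generators (z : R)
      (hz : ∀ a b : ι → ZMod N, z * (zmodMonomial y hy b * zmodMonomial x hx a) ∈ P) (v : R)
      (hv : v ∈ P) : z * v ∈ P :=
    (Submodule.span_le (p := P.comap (LinearMap.mulLeft K z))).2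
      (by rintro _ ⟨⟨a, b⟩, rfl⟩; exact hz a b) hv
  have mul_mem (z : R) : ∀ v ∈ P, z * v ∈ P := by
    have hz : z ∈ Algebra.adjoin K (Set.range (Sum.elim x y)) := hgen ▸ Algebra.mem_top
    induction hz using Algebra.adjoin_induction with
    | mem _ hs =>
      obtain ⟨i | i, rfl⟩ := hs
      · refine mul_mem_of_generators _ fun a b => ?_
        rw [Sum.elim_inl, ← mul_assoc,
          mul_zmodMonomial_eq_smul y hy (fun j hj => hxy i j hj.symm) (hxyc i), smul_mul_assoc,
          mul_assoc, mul_zmodMonomial x hx hxN]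
        exact P.smul_mem _ (mem_P _ _)
      · refine mul_mem_of_generators _ fun a b => ?_
        rw [Sum.elim_inr, ← mul_assoc, mul_zmodMonomial y hy hyN]
        exact mem_P _ _
    | algebraMap r => exact fun v hv => (Algebra.smul_def r v).symm ▸ P.smul_mem r hv
    | add z w _ _ hz hw => exact fun v hv => (add_mul z w v).symm ▸ P.add_mem (hz v hv) (hw v hv)
    | mul z w _ _ hz hw => exact fun v hv => (mul_assoc z w v).symm ▸ hz _ (hw v hv)
  refine eq_top_iff.2 fun z _ => ?_
  simpa using mul_mem z 1 (by simpa [zmodMonomial_zero] using mem_P 0 0)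

end Algebra

end Monomial

section Shift

variable (R : Type*) [CommSemiring R] {G : Type*} [AddMonoid G]

def shiftOp : Multiplicative G →* Module.End R (G → R) where
  toFun c := LinearMap.funLeft R R (· + c.toAdd)
  map_one' := LinearMap.ext fun _ => funext fun _ => by simp [LinearMap.funLeft_apply]
  map_mul' _ _ := LinearMap.ext fun _ => funext fun _ => by
    simp [LinearMap.funLeft_apply, add_assoc]

variable {R}

@[simp]
theorem shiftOp_apply (c : Multiplicative G) (f : G → R) (x : G) :
    shiftOp R c f x = f (x + c.toAdd) :=
  rfl

theorem shiftOp_mul_lmul (c : Multiplicative G) (d : G → R) :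
    shiftOp R c * Algebra.lmul R (G → R) d =
      Algebra.lmul R (G → R) (fun x => d (x + c.toAdd)) * shiftOp R c :=
  LinearMap.ext fun _ => funext fun _ => rfl

end Shift

section Decompositions

theorem sum_val_smul_single {ι : Type*} [Fintype ι] [DecidableEq ι] {N : ℕ} [NeZero N]
    (x : ι → ZMod N) : ∑ i, (x i).val • (Pi.single i 1 : ι → ZMod N) = x := by
  simp_rw [← Pi.single_smul, nsmul_one, ZMod.natCast_zmod_val, Finset.univ_sum_single]

theorem AddChar.map_sum_eq_prod {A M ι : Type*} [AddCommMonoid A] [CommMonoid M]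
    (ψ : AddChar A M) (s : Finset ι) (f : ι → A) : ψ (∑ i ∈ s, f i) = ∏ i ∈ s, ψ (f i) :=
  map_prod ψ.toMonoidHom (fun i => Multiplicative.ofAdd (f i)) s

theorem end_eq_sum_shiftOp_mul_lmul {R G : Type*} [CommSemiring R] [AddCommGroup G] [Fintype G]
    [DecidableEq G] (f : Module.End R (G → R)) :
    f = ∑ c : G, shiftOp R (Multiplicative.ofAdd c) *
      Algebra.lmul R (G → R) (fun y => f (Pi.single y 1) (y - c)) := by
  -- the `c`-th summand carries the entries of the matrix of `f` in positions `(x, x + c)`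
  refine LinearMap.ext fun g => funext fun x => ?_
  conv_lhs => rw [← Finset.univ_sum_single g]
  simp only [map_sum, Finset.sum_apply, LinearMap.sum_apply, Module.End.mul_apply,
    shiftOp_apply, Algebra.coe_lmul_eq_mul, LinearMap.mul_apply_apply, Pi.mul_apply,
    toAdd_ofAdd, add_sub_cancel_right]
  rw [← Equiv.sum_comp (Equiv.addLeft x)]
  refine Finset.sum_congr rfl fun c _ => ?_
  rw [Equiv.coe_addLeft, mul_comm, ← smul_eq_mul, ← Pi.smul_apply, ← map_smul,
    ← Pi.single_smul, smul_eq_mul, mul_one]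

end Decompositions

section SimpleModules

theorem IsSimpleRing.nonempty_linearEquiv_of_isSimpleModule (R : Type*) [Ring R] [IsSimpleRing R]
    [IsArtinianRing R] (M M' : Type*) [AddCommGroup M] [Module R M] [IsSimpleModule R M]
    [AddCommGroup M'] [Module R M'] [IsSimpleModule R M'] : Nonempty (M ≃ₗ[R] M') := by
  obtain ⟨I, ⟨e⟩⟩ := IsSemisimpleRing.exists_linearEquiv_ideal_of_isSimpleModule R M
  obtain ⟨I', ⟨e'⟩⟩ := IsSemisimpleRing.exists_linearEquiv_ideal_of_isSimpleModule R M'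
  have := IsSimpleModule.congr e.symm
  have := IsSimpleModule.congr e'.symm
  obtain ⟨f⟩ := IsSimpleRing.isIsotypic R R I' I
  exact ⟨e.trans (f.trans e'.symm)⟩

variable {K A V : Type*} [Field K] [Ring A] [Algebra K A] [AddCommGroup V] [Module K V]
  [FiniteDimensional K V] (e : A ≃ₐ[K] Module.End K V)

include e in
theorem isArtinianRing_of_algEquiv_end : IsArtinianRing A :=
  have := Module.Finite.equiv e.symm.toLinearEquiv
  .of_finite K A

variable [Nontrivial V]

include e in
theorem isSimpleRing_of_algEquiv_end : IsSimpleRing A :=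
  have : Nonempty (Fin (Module.finrank K V)) := Fin.pos_iff_nonempty.1 Module.finrank_pos
  .of_ringEquiv ((LinearMap.toMatrixAlgEquiv (Module.finBasis K V)).symm.trans e.symm).toRingEquiv
    inferInstance

include e in
theorem finrank_eq_of_algEquiv_end (M : Type*) [AddCommGroup M] [Module A M] [Module K M]
    [IsScalarTower K A M] [IsSimpleModule A M] : Module.finrank K M = Module.finrank K V := by
  let _ : Module A V := Module.compHom V e.toRingHom
  have : IsScalarTower K A V := ⟨fun c a v => by
    change e (c • a) v = c • e a v
    rw [map_smul, LinearMap.smul_apply]⟩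
  have : RingHomSurjective e.toRingHom := ⟨e.surjective⟩
  have : IsSimpleModule A V := (LinearMap.isSimpleModule_iff_of_bijective (σ := e.toRingHom)
    { AddMonoidHom.id V with map_smul' := fun _ _ => rfl } Function.bijective_id).2 inferInstance
  have := isSimpleRing_of_algEquiv_end e
  have := isArtinianRing_of_algEquiv_end e
  obtain ⟨f⟩ := IsSimpleRing.nonempty_linearEquiv_of_isSimpleModule A M V
  exact (f.restrictScalars K).finrank_eq

end SimpleModules

namespace Stmt2

section WeylRepresentation

variable {n N : ℕ} (q : ℂ)

def coordChar (i : Fin n) : (Fin n → ZMod N) → ℂ := fun x => q ^ (x i).val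

def weylXOp (i : Fin n) : Module.End ℂ ((Fin n → ZMod N) → ℂ) :=
  Algebra.lmul ℂ _ (coordChar q i)

def weylYOp (i : Fin n) : Module.End ℂ ((Fin n → ZMod N) → ℂ) :=
  shiftOp ℂ (Multiplicative.ofAdd (Pi.single i 1))

theorem weylXOp_commute (i j : Fin n) : Commute (weylXOp (N := N) q i) (weylXOp q j) :=
  (Commute.all _ _).map _

theorem weylYOp_commute (i j : Fin n) : Commute (weylYOp (N := N) i) (weylYOp j) :=
  (Commute.all _ _).map _

theorem weylXOp_commute_weylYOp {i j : Fin n} (hij : i ≠ j) :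
    Commute (weylXOp (N := N) q i) (weylYOp j) := by
  rw [Commute, SemiconjBy, weylXOp, weylYOp, shiftOp_mul_lmul]
  congr 2
  funext x
  simp [coordChar, Pi.single_eq_of_ne hij]

variable {q}

theorem weylXOp_pow (hq : q ^ N = 1) (i : Fin n) : weylXOp (N := N) q i ^ N = 1 := by
  rw [weylXOp, ← map_pow, ← map_one (Algebra.lmul ℂ ((Fin n → ZMod N) → ℂ))]
  congr 1
  funext x
  rw [Pi.pow_apply, coordChar, pow_right_comm, hq, one_pow, Pi.one_apply]

theorem weylYOp_pow (i : Fin n) : weylYOp (N := N) i ^ N = 1 := by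
  rw [weylYOp, ← map_pow, ← ofAdd_nsmul, ← map_one (shiftOp ℂ)]
  congr 1
  ext j
  rcases eq_or_ne j i with rfl | hj <;> simp [*]

variable [NeZero N]

theorem weylXOp_mul_weylYOp (hq : q ^ N = 1) (i : Fin n) :
    weylXOp q i * weylYOp i = q⁻¹ • (weylYOp (N := N) i * weylXOp q i) := by
  have hq0 : q ≠ 0 := by rintro rfl; simp [NeZero.ne N] at hq
  have hshift : (fun x => coordChar q i (x + (Multiplicative.ofAdd (Pi.single i 1)).toAdd)) =
      q • coordChar (N := N) q i := by
    funext x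
    simp [coordChar, pow_val_add_of_pow_eq_one hq, pow_val_one_of_pow_eq_one hq, mul_comm]
  rw [weylXOp, weylYOp, shiftOp_mul_lmul, hshift, map_smul, smul_mul_assoc, smul_smul,
    inv_mul_cancel₀ hq0, one_smul]

variable (q) in
def weylRep (hq : q ^ N = 1) : WeylAlg n N q →ₐ[ℂ] Module.End ℂ ((Fin n → ZMod N) → ℂ) :=
  RingQuot.liftAlgHom ℂ ⟨FreeAlgebra.lift ℂ (Sum.elim (weylXOp q) weylYOp), fun _ _ h => by
    induction h with
    | XX i j => simpa using (weylXOp_commute q i j).eq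
    | YY i j => simpa using (weylYOp_commute i j).eq
    | XYne i j hij => simpa using (weylXOp_commute_weylYOp q hij).eq
    | XY i => simpa using weylXOp_mul_weylYOp hq i
    | Xord i => simpa using weylXOp_pow hq i
    | Yord i => simpa using weylYOp_pow i⟩

end WeylRepresentation

section WeylGenerators

variable (n N : ℕ) (q : ℂ)

def weylX (i : Fin n) : WeylAlg n N q := RingQuot.mkAlgHom ℂ (Rel n N q) (Xg n i)

def weylY (i : Fin n) : WeylAlg n N q := RingQuot.mkAlgHom ℂ (Rel n N q) (Yg n i)

variable {n N q}

theorem weylX_commute (i j : Fin n) : Commute (weylX n N q i) (weylX n N q j) := by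
  simpa only [Commute, SemiconjBy, weylX, ← map_mul] using RingQuot.mkAlgHom_rel ℂ (Rel.XX i j)

theorem weylY_commute (i j : Fin n) : Commute (weylY n N q i) (weylY n N q j) := by
  simpa only [Commute, SemiconjBy, weylY, ← map_mul] using RingQuot.mkAlgHom_rel ℂ (Rel.YY i j)

theorem weylX_commute_weylY {i j : Fin n} (hij : i ≠ j) :
    Commute (weylX n N q i) (weylY n N q j) := by
  simpa only [Commute, SemiconjBy, weylX, weylY, ← map_mul] using
    RingQuot.mkAlgHom_rel ℂ (Rel.XYne (N := N) (q := q) i j hij)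

theorem weylX_mul_weylY (i : Fin n) :
    weylX n N q i * weylY n N q i = q⁻¹ • (weylY n N q i * weylX n N q i) := by
  simpa only [weylX, weylY, ← map_mul, ← map_smul] using RingQuot.mkAlgHom_rel ℂ (Rel.XY i)

theorem weylX_pow (i : Fin n) : weylX n N q i ^ N = 1 := by
  simpa only [weylX, ← map_pow, map_one] using RingQuot.mkAlgHom_rel ℂ (Rel.Xord (q := q) i)

theorem weylY_pow (i : Fin n) : weylY n N q i ^ N = 1 := by
  simpa only [weylY, ← map_pow, map_one] using RingQuot.mkAlgHom_rel ℂ (Rel.Yord (q := q) i)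

theorem adjoin_weylGenerators_eq_top :
    Algebra.adjoin ℂ (Set.range (Sum.elim (weylX n N q) (weylY n N q))) = ⊤ := by
  have : Sum.elim (weylX n N q) (weylY n N q) =
      RingQuot.mkAlgHom ℂ (Rel n N q) ∘ FreeAlgebra.ι ℂ := by
    ext (i | i) <;> rfl
  rw [this, Set.range_comp, ← AlgHom.map_adjoin, FreeAlgebra.adjoin_range_ι, Algebra.map_top,
    AlgHom.range_eq_top]
  exact RingQuot.mkAlgHom_surjective ℂ _

theorem span_weylMonomials_eq_top [NeZero N] :
    Submodule.span ℂ (Set.range fun p : (Fin n → ZMod N) × (Fin n → ZMod N) =>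
      zmodMonomial (weylY n N q) weylY_commute p.2 *
        zmodMonomial (weylX n N q) weylX_commute p.1) = ⊤ :=
  span_zmodMonomial_mul_zmodMonomial_eq_top _ _ _ _ weylX_pow weylY_pow
    (fun _ _ => weylX_commute_weylY) q⁻¹ weylX_mul_weylY adjoin_weylGenerators_eq_top

end WeylGenerators

section WeylRepBijective

variable {n N : ℕ} [NeZero N] {q : ℂ}

theorem exists_addChar_eq_prod_coordChar (hq : IsPrimitiveRoot q N)
    (ψ : AddChar (Fin n → ZMod N) ℂ) : ∃ k : Fin n → ℕ, ⇑ψ = ∏ i, coordChar q i ^ k i := by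
  have hroot (i : Fin n) : ψ (Pi.single i 1) ^ N = 1 := by
    rw [← ψ.map_nsmul_eq_pow, ← Pi.single_smul, nsmul_one, ZMod.natCast_self, Pi.single_zero,
      AddChar.map_zero_eq_one]
  choose k _ hk using fun i => hq.eq_pow_of_pow_eq_one (hroot i)
  refine ⟨k, funext fun x => ?_⟩
  conv_lhs => rw [← sum_val_smul_single x]
  simp only [ψ.map_sum_eq_prod, ψ.map_nsmul_eq_pow, ← hk, Finset.prod_apply, Pi.pow_apply,
    coordChar, ← pow_mul, mul_comm]

theorem weylRep_weylX (hq : q ^ N = 1) (i : Fin n) :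
    weylRep q hq (weylX n N q i) = weylXOp q i := by
  simp [weylRep, weylX, RingQuot.liftAlgHom_mkAlgHom_apply]

theorem weylRep_weylY (hq : q ^ N = 1) (i : Fin n) :
    weylRep q hq (weylY n N q i) = weylYOp i := by
  simp [weylRep, weylY, RingQuot.liftAlgHom_mkAlgHom_apply]

theorem lmul_mem_range_weylRep (hq : IsPrimitiveRoot q N) (d : (Fin n → ZMod N) → ℂ) :
    Algebra.lmul ℂ _ d ∈ (weylRep q hq.pow_eq_one).range := by
  let S := (weylRep q hq.pow_eq_one).range.comap (Algebra.lmul ℂ ((Fin n → ZMod N) → ℂ))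
  have hchar (ψ : AddChar (Fin n → ZMod N) ℂ) : ⇑ψ ∈ S := by
    obtain ⟨k, hk⟩ := exists_addChar_eq_prod_coordChar hq ψ
    rw [hk]
    exact S.prod_mem fun i _ => S.pow_mem ⟨weylX n N q i, weylRep_weylX _ i⟩ _
  have hspan : Submodule.span ℂ (Set.range (AddChar.complexBasis (Fin n → ZMod N))) ≤
      Subalgebra.toSubmodule S := by
    rw [AddChar.coe_complexBasis]
    exact Submodule.span_le.2 (Set.range_subset_iff.2 hchar)
  rw [(AddChar.complexBasis _).span_eq] at hspan
  exact hspan Submodule.mem_top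

theorem shiftOp_mem_range_weylRep (hq : q ^ N = 1) (c : Multiplicative (Fin n → ZMod N)) :
    shiftOp ℂ c ∈ (weylRep q hq).range := by
  let T := (weylRep (n := n) q hq).range.toSubmonoid.comap (shiftOp ℂ)
  have hc : c = ∏ i, Multiplicative.ofAdd (Pi.single i 1) ^ (c.toAdd i).val := by
    simp_rw [← ofAdd_nsmul, ← ofAdd_sum, sum_val_smul_single, ofAdd_toAdd]
  rw [hc]
  exact T.prod_mem fun i _ => T.pow_mem ⟨weylY n N q i, weylRep_weylY _ i⟩ _

theorem weylRep_surjective (hq : IsPrimitiveRoot q N) :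
    Function.Surjective (weylRep (n := n) q hq.pow_eq_one) := by
  refine (AlgHom.range_eq_top _).1 (eq_top_iff.2 fun f _ => ?_)
  rw [end_eq_sum_shiftOp_mul_lmul f]
  exact Subalgebra.sum_mem _ fun c _ => Subalgebra.mul_mem _
    (shiftOp_mem_range_weylRep _ _) (lmul_mem_range_weylRep hq _)

theorem finite_weylAlg : Module.Finite ℂ (WeylAlg n N q) :=
  ⟨⟨(Set.finite_range _).toFinset, by
    rw [Set.Finite.coe_toFinset]; exact span_weylMonomials_eq_top⟩⟩

theorem finrank_weylAlg_le : Module.finrank ℂ (WeylAlg n N q) ≤ N ^ n * N ^ n := by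
  have := finrank_range_le_card (R := ℂ) fun p : (Fin n → ZMod N) × (Fin n → ZMod N) =>
    zmodMonomial (weylY n N q) weylY_commute p.2 * zmodMonomial (weylX n N q) weylX_commute p.1
  rwa [Set.finrank, span_weylMonomials_eq_top, finrank_top, Fintype.card_prod, Fintype.card_fun,
    ZMod.card, Fintype.card_fin] at this

theorem weylRep_bijective (hq : IsPrimitiveRoot q N) :
    Function.Bijective (weylRep (n := n) q hq.pow_eq_one) := by
  have := finite_weylAlg (n := n) (N := N) (q := q)
  have hsurj := weylRep_surjective (n := n) hq
  have hEnd : Module.finrank ℂ (Module.End ℂ ((Fin n → ZMod N) → ℂ)) = N ^ n * N ^ n := by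
    rw [Module.finrank_linearMap, Module.finrank_fintype_fun_eq_card, Fintype.card_fun, ZMod.card,
      Fintype.card_fin]
  let ρ := (weylRep (n := n) q hq.pow_eq_one).toLinearMap
  have hrank : Module.finrank ℂ (WeylAlg n N q) = Module.finrank ℂ (Module.End ℂ _) :=
    le_antisymm (hEnd ▸ finrank_weylAlg_le)
      (LinearMap.finrank_le_finrank_of_surjective (f := ρ) hsurj)
  exact ⟨(LinearMap.injective_iff_surjective_of_finrank_eq_finrank hrank (f := ρ)).2 hsurj, hsurj⟩

end WeylRepBijective

theorem stmt_2_general (n N : ℕ) (hN : 1 ≤ N) (q : ℂ) (hq : IsPrimitiveRoot q N)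
    (M : Type) [AddCommGroup M] [Module (WeylAlg n N q) M]
    [Module ℂ M] [IsScalarTower ℂ (WeylAlg n N q) M] [IsSimpleModule (WeylAlg n N q) M]
    (M' : Type) [AddCommGroup M'] [Module (WeylAlg n N q) M']
    [IsSimpleModule (WeylAlg n N q) M'] :
    Module.finrank ℂ M = N ^ n ∧ Nonempty (M ≃ₗ[WeylAlg n N q] M') := by
  have : NeZero N := ⟨by omega⟩
  let e := AlgEquiv.ofBijective (weylRep q hq.pow_eq_one) (weylRep_bijective (n := n) hq)
  have := isSimpleRing_of_algEquiv_end e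
  have := isArtinianRing_of_algEquiv_end e
  refine ⟨?_, IsSimpleRing.nonempty_linearEquiv_of_isSimpleModule _ M M'⟩
  rw [finrank_eq_of_algEquiv_end e M, Module.finrank_fintype_fun_eq_card, Fintype.card_fun,
    ZMod.card, Fintype.card_fin]

/-- every nonzero simple left `A_{n,q}`-module has ℂ-dimension `N^n`, and
any two nonzero simple left `A_{n,q}`-modules are isomorphic. -/
theorem stmt_2 (n N : ℕ) (hn : 1 ≤ n) (hN : 1 ≤ N) (q : ℂ) (hq : IsPrimitiveRoot q N)
    (M : Type) [AddCommGroup M] [Module (WeylAlg n N q) M]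
    [Module ℂ M] [IsScalarTower ℂ (WeylAlg n N q) M] [IsSimpleModule (WeylAlg n N q) M]
    (M' : Type) [AddCommGroup M'] [Module (WeylAlg n N q) M']
    [IsSimpleModule (WeylAlg n N q) M'] :
    Module.finrank ℂ M = N ^ n ∧ Nonempty (M ≃ₗ[WeylAlg n N q] M') :=
  stmt_2_general n N hN q hq M M'

end Stmt2
end
end

section
/- If b ∈ P satisfies 0 < (b, α^∨) < 1 + h for every α ∈ R_+, then either b = ρ, or b = ρ + ω_r for some minuscule fundamental weight ω_r. -/
noncomputable section

open scoped RealInnerProductSpace BigOperators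

/-- Euclidean space `ℝ^n`, the ambient space of the root system. -/
abbrev Vn (n : ℕ) := EuclideanSpace ℝ (Fin n)

/-- The coroot `α^∨ = 2α/(α,α)` of a vector `α`. -/
def coroot {n : ℕ} (α : Vn n) : Vn n := (2 / ⟪α, α⟫) • α

/-- The reflection `s_α` applied to `β`: `β − (β, α^∨)·α`. -/
def reflVec {n : ℕ} (α β : Vn n) : Vn n := β - (2 * ⟪β, α⟫ / ⟪α, α⟫) • α

/-- An irreducible reduced crystallographic root system of rank `n` in `ℝ^n`, together
with a fixed base of simple roots `α_1,…,α_n`, the corresponding set of positive roots,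
the fundamental weights `ω_1,…,ω_n` and the highest short root `θ`. -/
structure RootSystemData (n : ℕ) where
  /-- the set of roots -/
  R : Finset (Vn n)
  /-- the set of positive roots -/
  Rplus : Finset (Vn n)
  /-- the simple roots `α_1,…,α_n` -/
  sroot : Fin n → Vn n
  /-- the fundamental weights `ω_1,…,ω_n` -/
  fw : Fin n → Vn n
  /-- the highest short root `θ` -/
  hst : Vn n
  root_ne_zero : ∀ α ∈ R, α ≠ (0 : Vn n)
  span_top : Submodule.span ℝ (R : Set (Vn n)) = ⊤
  reflect_mem : ∀ α ∈ R, ∀ β ∈ R, reflVec α β ∈ R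
  crystallographic : ∀ α ∈ R, ∀ β ∈ R, ∃ z : ℤ, 2 * ⟪β, α⟫ / ⟪α, α⟫ = (z : ℝ)
  reduced : ∀ α ∈ R, ∀ c : ℝ, c • α ∈ R → c = 1 ∨ c = -1
  irreducible : ∀ S : Set (Vn n), (∃ α ∈ R, α ∈ S) →
    (∀ α ∈ R, ∀ β ∈ R, α ∈ S → ⟪α, β⟫ ≠ 0 → β ∈ S) → ∀ β ∈ R, β ∈ S
  sroot_mem : ∀ i, sroot i ∈ Rplus
  pos_sub : Rplus ⊆ R
  pos_or : ∀ α ∈ R, α ∈ Rplus ∨ -α ∈ Rplus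
  pos_not_and : ∀ α ∈ Rplus, -α ∉ Rplus
  pos_decomp : ∀ α ∈ Rplus, ∃ c : Fin n → ℕ, α = ∑ i, (c i : ℝ) • sroot i
  fw_pair : ∀ i j, ⟪fw i, coroot (sroot j)⟫ = if i = j then 1 else 0
  theta_mem : hst ∈ Rplus
  theta_short : ∀ α ∈ R, ⟪hst, hst⟫ ≤ ⟪α, α⟫
  theta_highest : ∀ α ∈ R, ∃ c : Fin n → ℝ, (∀ i, 0 ≤ c i) ∧
    coroot hst - coroot α = ∑ i, c i • coroot (sroot i)

namespace RootSystemData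

variable {n : ℕ} (D : RootSystemData n)

/-- The weight lattice `P = ⊕_i ℤ·ω_i`. -/
def P : Submodule ℤ (Vn n) := Submodule.span ℤ (Set.range D.fw)

/-- `ρ = ω_1 + ⋯ + ω_n` (the half-sum of the positive roots). -/
def rho : Vn n := ∑ i, D.fw i

/-- The Coxeter number `h = 1 + (ρ, θ^∨)`. -/
def h : ℝ := 1 + ⟪D.rho, coroot D.hst⟫

/-- The Weyl group `W`, as the subgroup of `GL(ℝ^n)` generated by the reflections
`s_α`, `α ∈ R`. -/
def Weyl : Subgroup ((Vn n) ≃ₗ[ℝ] (Vn n)) :=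
  Subgroup.closure { w | ∃ α ∈ D.R, ∀ v, w v = reflVec α v }

/-- `ω_r` is a minuscule (fundamental) weight: `(ω_r, α^∨) ≤ 1` for all `α ∈ R_+`. -/
def Minuscule (r : Fin n) : Prop := ∀ α ∈ D.Rplus, ⟪D.fw r, coroot α⟫ ≤ 1

end RootSystemData


-- Auxiliary lemmas
variable {n : ℕ}

lemma inner_coroot_right (v α : Vn n) : ⟪v, coroot α⟫ = 2 * ⟪v, α⟫ / ⟪α, α⟫ := by
  simp only [coroot, real_inner_smul_right]; ring

lemma reflVec_norm (α β : Vn n) (hα : ⟪α, α⟫ ≠ 0) :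
    ⟪reflVec α β, reflVec α β⟫ = ⟪β, β⟫ := by
  simp only [reflVec, inner_sub_left, inner_sub_right, real_inner_smul_left,
    real_inner_smul_right, real_inner_comm β α]
  set a : ℝ := ⟪α, α⟫ with ha
  set c : ℝ := ⟪α, β⟫ with hc
  field_simp
  ring

lemma reflVec_invol (α β : Vn n) (hα : ⟪α, α⟫ ≠ 0) : reflVec α (reflVec α β) = β := by
  have h1 : ⟪reflVec α β, α⟫ = -⟪β, α⟫ := by
    simp only [reflVec, inner_sub_left, real_inner_smul_left]
    set a : ℝ := ⟪α, α⟫ with ha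
    set c : ℝ := ⟪β, α⟫ with hc
    field_simp
    linarith
  simp only [reflVec] at h1 ⊢
  rw [h1, show 2 * -⟪β, α⟫ / ⟪α, α⟫ = -(2 * ⟪β, α⟫ / ⟪α, α⟫) by ring, neg_smul,
    sub_neg_eq_add, sub_add_cancel]

lemma coroot_reflVec (α β : Vn n) (hα : ⟪α, α⟫ ≠ 0) :
    coroot (reflVec α β) = coroot β - (2 * ⟪α, β⟫ / ⟪β, β⟫) • coroot α := by
  unfold coroot
  rw [reflVec_norm α β hα]
  unfold reflVec
  rw [smul_sub, smul_smul, smul_smul]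
  congr 1
  rw [real_inner_comm α β]
  ring_nf


namespace RootSystemData
variable {n : ℕ} (D : RootSystemData n)


lemma pos_ne_zero {α : Vn n} (hα : α ∈ D.Rplus) : α ≠ 0 :=
  D.root_ne_zero α (D.pos_sub hα)

lemma pos_inner_self_pos {α : Vn n} (hα : α ∈ D.Rplus) : 0 < ⟪α, α⟫ :=
  lt_of_le_of_ne real_inner_self_nonneg
    (fun he => (D.pos_ne_zero hα) (inner_self_eq_zero.mp he.symm))

lemma sroot_inner_self_pos (i : Fin n) : 0 < ⟪D.sroot i, D.sroot i⟫ :=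
  D.pos_inner_self_pos (D.sroot_mem i)

lemma inner_fw_sroot (i j : Fin n) :
    ⟪D.fw i, D.sroot j⟫ = if i = j then ⟪D.sroot j, D.sroot j⟫ / 2 else 0 := by
  have h := D.fw_pair i j
  rw [inner_coroot_right] at h
  have hj := (D.sroot_inner_self_pos j).ne'
  set p : ℝ := ⟪D.fw i, D.sroot j⟫ with hp
  set s : ℝ := ⟪D.sroot j, D.sroot j⟫ with hs
  by_cases hij : i = j <;> simp only [hij, if_pos, if_neg, if_true, if_false] at h ⊢
  · field_simp at h; linarith
  · field_simp at h; linarith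

/-- pairing `fw i` against a linear combination of simple roots extracts coefficients -/
lemma inner_fw_combo (i : Fin n) (x : Fin n → ℝ) :
    ⟪D.fw i, ∑ j, x j • D.sroot j⟫ = x i * (⟪D.sroot i, D.sroot i⟫ / 2) := by
  rw [inner_sum]
  rw [Finset.sum_eq_single i]
  · rw [real_inner_smul_right, inner_fw_sroot]; simp
  · intro j _ hj
    rw [real_inner_smul_right, inner_fw_sroot]
    simp [Ne.symm hj]
  · simp

/-- uniqueness of decompositions in simple roots -/
lemma combo_unique {x y : Fin n → ℝ}
    (hxy : ∑ j, x j • D.sroot j = ∑ j, y j • D.sroot j) : x = y := by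
  funext i
  have h1 := D.inner_fw_combo i x
  rw [hxy, D.inner_fw_combo i y] at h1
  have hs : (0:ℝ) < ⟪D.sroot i, D.sroot i⟫ / 2 := by
    have := D.sroot_inner_self_pos i; linarith
  exact (mul_right_cancel₀ (ne_of_gt hs) h1).symm

/-- pairing `fw i` against a combination of simple coroots extracts coefficients -/
lemma inner_fw_coroot_combo (i : Fin n) (x : Fin n → ℝ) :
    ⟪D.fw i, ∑ j, x j • coroot (D.sroot j)⟫ = x i := by
  rw [inner_sum]
  rw [Finset.sum_eq_single i]
  · rw [real_inner_smul_right, D.fw_pair]; simp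
  · intro j _ hj
    rw [real_inner_smul_right, D.fw_pair]
    simp [Ne.symm hj]
  · simp


lemma sroot_mem_R (i : Fin n) : D.sroot i ∈ D.R := D.pos_sub (D.sroot_mem i)

/-- reflecting a positive root other than `α_i` in `α_i` gives a positive root -/
lemma reflVec_sroot_pos (i : Fin n) {α : Vn n} (hα : α ∈ D.Rplus)
    (hne : α ≠ D.sroot i) : reflVec (D.sroot i) α ∈ D.Rplus := by
  have hR : reflVec (D.sroot i) α ∈ D.R :=
    D.reflect_mem _ (D.sroot_mem_R i) _ (D.pos_sub hα)
  rcases D.pos_or _ hR with h | h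
  · exact h
  exfalso
  obtain ⟨c, hc⟩ := D.pos_decomp α hα
  obtain ⟨d, hd⟩ := D.pos_decomp _ h
  set t : ℝ := 2 * ⟪α, D.sroot i⟫ / ⟪D.sroot i, D.sroot i⟫ with ht
  have hβ : reflVec (D.sroot i) α = α - t • D.sroot i := rfl
  have key : ∑ j, ((c j : ℝ) + (d j : ℝ)) • D.sroot j
      = ∑ j, (if j = i then t else 0) • D.sroot j := by
    have h1 : ∑ j, ((c j : ℝ) + (d j : ℝ)) • D.sroot j
        = ∑ j, (c j : ℝ) • D.sroot j + ∑ j, (d j : ℝ) • D.sroot j := by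
      rw [← Finset.sum_add_distrib]
      exact Finset.sum_congr rfl (fun j _ => by rw [add_smul])
    have h2 : ∑ j, (if j = i then t else 0) • D.sroot j = t • D.sroot i := by
      simp [ite_smul]
    rw [h1, h2, ← hc, ← hd, hβ]
    abel
  have heq : ∀ j, (c j : ℝ) + (d j : ℝ) = if j = i then t else 0 :=
    fun j => congrFun (D.combo_unique key) j
  have hji : ∀ j, j ≠ i → c j = 0 := by
    intro j hj
    have h3 := heq j
    rw [if_neg hj] at h3
    have h4 : (c j : ℝ) = 0 := by
      have : (0:ℝ) ≤ (c j : ℝ) := Nat.cast_nonneg _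
      have : (0:ℝ) ≤ (d j : ℝ) := Nat.cast_nonneg _
      linarith
    exact_mod_cast h4
  have hαi : α = (c i : ℝ) • D.sroot i := by
    rw [hc, Finset.sum_eq_single i]
    · intro j _ hj
      rw [hji j hj]; simp
    · simp
  have hmem : (c i : ℝ) • D.sroot i ∈ D.R := by rw [← hαi]; exact D.pos_sub hα
  rcases D.reduced _ (D.sroot_mem_R i) _ hmem with h1 | h1
  · apply hne
    rw [hαi, h1, one_smul]
  · have : (0:ℝ) ≤ (c i : ℝ) := Nat.cast_nonneg _
    rw [h1] at this
    linarith

/-- every positive coroot is a `ℤ`-combination of simple coroots -/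
lemma coroot_int_combo : ∀ N : ℕ, ∀ α ∈ D.Rplus, ∀ c : Fin n → ℕ,
    α = ∑ j, (c j : ℝ) • D.sroot j → ∑ j, c j ≤ N →
    ∃ z : Fin n → ℤ, coroot α = ∑ j, (z j : ℝ) • coroot (D.sroot j) := by
  intro N
  induction N with
  | zero =>
    intro α hα c hc hN
    exfalso
    apply D.pos_ne_zero hα
    have hc0 : ∀ j, c j = 0 := by
      intro j
      have := Finset.sum_eq_zero_iff.mp (Nat.le_zero.mp hN) j (Finset.mem_univ j)
      exact this
    rw [hc]
    apply Finset.sum_eq_zero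
    intro j _
    rw [hc0 j]; simp
  | succ N ih =>
    intro α hα c hc hN
    by_cases hsimple : ∃ i, α = D.sroot i
    · obtain ⟨i, rfl⟩ := hsimple
      refine ⟨fun j => if j = i then 1 else 0, ?_⟩
      rw [Finset.sum_eq_single i] <;> simp +contextual
    push_neg at hsimple
    have hself : 0 < ⟪α, α⟫ := D.pos_inner_self_pos hα
    have hsum : ⟪α, α⟫ = ∑ j, (c j : ℝ) * ⟪D.sroot j, α⟫ := by
      calc ⟪α, α⟫ = ⟪∑ j, (c j : ℝ) • D.sroot j, α⟫ := by rw [← hc]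
        _ = ∑ j, (c j : ℝ) * ⟪D.sroot j, α⟫ := by
            rw [sum_inner]
            exact Finset.sum_congr rfl (fun j _ => real_inner_smul_left _ _ _)
    have hex : ∃ i, 0 < (c i : ℝ) * ⟪D.sroot i, α⟫ := by
      by_contra hcon
      push_neg at hcon
      have : ⟪α, α⟫ ≤ 0 := by
        rw [hsum]; exact Finset.sum_nonpos (fun j _ => hcon j)
      linarith
    obtain ⟨i, hi⟩ := hex
    have hci : 0 < c i := by
      rcases Nat.eq_zero_or_pos (c i) with h | h
      · rw [h] at hi; simp at hi
      · exact h
    have hip : 0 < ⟪D.sroot i, α⟫ := by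
      rcases lt_trichotomy (⟪D.sroot i, α⟫ : ℝ) 0 with h | h | h
      · exfalso; nlinarith [Nat.cast_nonneg (α := ℝ) (c i)]
      · rw [h] at hi; simp at hi
      · exact h
    obtain ⟨q, hq⟩ := D.crystallographic _ (D.sroot_mem_R i) _ (D.pos_sub hα)
    have hq1 : (1:ℝ) ≤ (q:ℝ) := by
      have hqpos : (0:ℝ) < (q:ℝ) := by
        rw [← hq]
        apply div_pos
        · rw [real_inner_comm]; linarith
        · exact D.sroot_inner_self_pos i
      have : (0:ℤ) < q := by exact_mod_cast hqpos
      exact_mod_cast this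
    set β := reflVec (D.sroot i) α with hβdef
    have hβpos : β ∈ D.Rplus := D.reflVec_sroot_pos i hα (hsimple i)
    have hβ : β = α - (q:ℝ) • D.sroot i := by
      rw [hβdef]
      unfold reflVec
      rw [hq]
    obtain ⟨d, hd⟩ := D.pos_decomp β hβpos
    have key : ∑ j, (d j : ℝ) • D.sroot j
        = ∑ j, ((c j : ℝ) - if j = i then (q:ℝ) else 0) • D.sroot j := by
      have h1 : ∑ j, ((c j : ℝ) - if j = i then (q:ℝ) else 0) • D.sroot j
          = ∑ j, (c j : ℝ) • D.sroot j - ∑ j, (if j = i then (q:ℝ) else 0) • D.sroot j := by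
        rw [← Finset.sum_sub_distrib]
        exact Finset.sum_congr rfl (fun j _ => by rw [sub_smul])
      have h2 : ∑ j, (if j = i then (q:ℝ) else 0) • D.sroot j = (q:ℝ) • D.sroot i := by
        simp [ite_smul]
      rw [h1, h2, ← hc, ← hd, hβ]
    have heq : ∀ j, (d j : ℝ) = (c j : ℝ) - if j = i then (q:ℝ) else 0 :=
      fun j => congrFun (D.combo_unique key) j
    have hdlt : d i < c i := by
      have h3 := heq i
      rw [if_pos rfl] at h3
      have : (d i : ℝ) < (c i : ℝ) := by linarith
      exact_mod_cast this
    have hdeq : ∀ j, j ≠ i → d j = c j := by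
      intro j hj
      have h3 := heq j
      rw [if_neg hj, sub_zero] at h3
      exact_mod_cast h3
    have hdsum : ∑ j, d j ≤ N := by
      have hlt : ∑ j, d j < ∑ j, c j := by
        apply Finset.sum_lt_sum (fun j _ => ?_) ⟨i, Finset.mem_univ i, hdlt⟩
        by_cases hj : j = i
        · subst hj; exact le_of_lt hdlt
        · rw [hdeq j hj]
      omega
    obtain ⟨z, hz⟩ := ih β hβpos d hd hdsum
    obtain ⟨m, hm⟩ := D.crystallographic _ (D.pos_sub hβpos) _ (D.sroot_mem_R i)
    have hαβ : α = reflVec (D.sroot i) β :=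
      (reflVec_invol (D.sroot i) α (D.sroot_inner_self_pos i).ne').symm
    have hcor : coroot α = coroot β - (m:ℝ) • coroot (D.sroot i) := by
      rw [hαβ, coroot_reflVec _ _ (D.sroot_inner_self_pos i).ne', hm]
    refine ⟨fun j => z j - if j = i then m else 0, ?_⟩
    have h1 : ∑ j, ((z j - if j = i then m else 0 : ℤ) : ℝ) • coroot (D.sroot j)
        = ∑ j, (z j : ℝ) • coroot (D.sroot j)
          - ∑ j, (if j = i then (m:ℝ) else 0) • coroot (D.sroot j) := by
      rw [← Finset.sum_sub_distrib]
      apply Finset.sum_congr rfl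
      intro j _
      rw [← sub_smul]
      congr 1
      push_cast
      by_cases hj : j = i <;> simp [hj]
    have h2 : ∑ j, (if j = i then (m:ℝ) else 0) • coroot (D.sroot j)
        = (m:ℝ) • coroot (D.sroot i) := by
      simp [ite_smul]
    rw [h1, h2, ← hz, hcor]

/-- weights pair integrally with positive coroots -/
lemma fw_coroot_int {α : Vn n} (hα : α ∈ D.Rplus) (i : Fin n) :
    ∃ z : ℤ, ⟪D.fw i, coroot α⟫ = (z : ℝ) := by
  obtain ⟨c, hc⟩ := D.pos_decomp α hα
  obtain ⟨z, hz⟩ := D.coroot_int_combo (∑ j, c j) α hα c hc le_rfl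
  exact ⟨z i, by rw [hz, D.inner_fw_coroot_combo]⟩



lemma a_ge_one (i : Fin n) : 1 ≤ ⟪D.fw i, coroot D.hst⟫ := by
  obtain ⟨c, hc0, hc⟩ := D.theta_highest _ (D.sroot_mem_R i)
  have h1 := congrArg (fun v => (⟪D.fw i, v⟫ : ℝ)) hc
  simp only [inner_sub_right] at h1
  rw [D.fw_pair i i, D.inner_fw_coroot_combo, if_pos rfl] at h1
  have := hc0 i
  linarith

lemma fw_coroot_le_theta (r : Fin n) {α : Vn n} (hα : α ∈ D.R) :
    ⟪D.fw r, coroot α⟫ ≤ ⟪D.fw r, coroot D.hst⟫ := by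
  obtain ⟨c, hc0, hc⟩ := D.theta_highest _ hα
  have h1 := congrArg (fun v => (⟪D.fw r, v⟫ : ℝ)) hc
  simp only [inner_sub_right] at h1
  rw [D.inner_fw_coroot_combo] at h1
  have := hc0 r
  linarith


end RootSystemData

/-- if `b ∈ P` satisfies `0 < (b, α^∨) < 1 + h` for every positive root
`α`, then either `b = ρ`, or `b = ρ + ω_r` for some minuscule fundamental weight
`ω_r`. -/
theorem stmt_4 {n : ℕ} (D : RootSystemData n) (b : Vn n) (hb : b ∈ D.P)
    (hreg : ∀ α ∈ D.Rplus, 0 < ⟪b, coroot α⟫ ∧ ⟪b, coroot α⟫ < 1 + D.h) :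
    b = D.rho ∨ ∃ r : Fin n, D.Minuscule r ∧ b = D.rho + D.fw r := by
  classical
  -- represent b as an integer combination of fundamental weights
  obtain ⟨m, hm⟩ : ∃ m : Fin n → ℤ, b = ∑ i, (m i : ℝ) • D.fw i := by
    refine Submodule.span_induction ?_ ?_ ?_ ?_ hb
    · rintro x ⟨i, rfl⟩
      refine ⟨fun j => if j = i then 1 else 0, ?_⟩
      rw [Finset.sum_congr rfl (fun j _ => ?_), Finset.sum_ite_eq' Finset.univ i D.fw]
      · simp
      · by_cases hj : j = i <;> simp [hj]
    · exact ⟨0, by simp⟩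
    · rintro x y - - ⟨mx, hx⟩ ⟨my, hy⟩
      refine ⟨mx + my, ?_⟩
      rw [hx, hy, ← Finset.sum_add_distrib]
      exact Finset.sum_congr rfl (fun j _ => by rw [Pi.add_apply]; push_cast; rw [add_smul])
    · rintro a x - ⟨mx, hx⟩
      refine ⟨a • mx, ?_⟩
      rw [← Int.cast_smul_eq_zsmul ℝ a x, hx, Finset.smul_sum]
      refine Finset.sum_congr rfl (fun j _ => ?_)
      rw [smul_smul]
      push_cast
      simp [smul_smul]
  have hbm : ∀ j, ⟪b, coroot (D.sroot j)⟫ = (m j : ℝ) := by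
    intro j
    rw [hm, sum_inner, Finset.sum_eq_single j]
    · rw [real_inner_smul_left, D.fw_pair]; simp
    · intro i _ hi
      rw [real_inner_smul_left, D.fw_pair]
      simp [hi]
    · simp
  have hm1 : ∀ j, 1 ≤ m j := by
    intro j
    have h1 := (hreg _ (D.sroot_mem j)).1
    rw [hbm j] at h1
    exact_mod_cast h1
  set a : Fin n → ℝ := fun i => ⟪D.fw i, coroot D.hst⟫ with ha
  have ha1 : ∀ i, 1 ≤ a i := fun i => D.a_ge_one i
  have hrho : ⟪D.rho, coroot D.hst⟫ = ∑ i, a i := by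
    rw [RootSystemData.rho, sum_inner]
  have hbth : ⟪b, coroot D.hst⟫ = ∑ i, (m i : ℝ) * a i := by
    rw [hm, sum_inner]
    exact Finset.sum_congr rfl (fun i _ => real_inner_smul_left _ _ _)
  have hkey : ∑ i, ((m i : ℝ) - 1) * a i < 2 := by
    have h2 := (hreg _ D.theta_mem).2
    rw [hbth] at h2
    have hh : D.h = 1 + ∑ i, a i := by rw [RootSystemData.h, hrho]
    rw [hh] at h2
    have h3 : ∑ i, ((m i : ℝ) - 1) * a i = ∑ i, (m i : ℝ) * a i - ∑ i, a i := by
      rw [← Finset.sum_sub_distrib]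
      exact Finset.sum_congr rfl (fun i _ => by ring)
    rw [h3]
    linarith
  by_cases hall : ∀ i, m i = 1
  · left
    rw [hm, RootSystemData.rho]
    exact Finset.sum_congr rfl (fun i _ => by rw [hall i]; simp)
  · right
    push_neg at hall
    obtain ⟨r, hr⟩ := hall
    have hmr : 2 ≤ m r := by have := hm1 r; omega
    set t : Fin n → ℝ := fun i => ((m i : ℝ) - 1) * a i with htdef
    have ht0 : ∀ i, 0 ≤ t i := by
      intro i
      apply mul_nonneg
      · have : (1:ℝ) ≤ (m i : ℝ) := by exact_mod_cast hm1 i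
        linarith
      · linarith [ha1 i]
    have htr2 : t r < 2 :=
      lt_of_le_of_lt (Finset.single_le_sum (fun i _ => ht0 i) (Finset.mem_univ r)) hkey
    have hmr2 : m r = 2 := by
      by_contra hne
      have h3 : 3 ≤ m r := by omega
      have h3' : (3:ℝ) ≤ (m r : ℝ) := by exact_mod_cast h3
      have : (2:ℝ) ≤ t r := by
        have := ha1 r
        calc (2:ℝ) = 2 * 1 := by ring
          _ ≤ ((m r : ℝ) - 1) * a r := by nlinarith
          _ = t r := rfl
      linarith
    have hmr2' : (m r : ℝ) = 2 := by exact_mod_cast hmr2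
    have har2 : a r < 2 := by
      have : t r = a r := by rw [htdef]; simp only; rw [hmr2']; ring
      linarith
    have har1 : a r = 1 := by
      obtain ⟨z, hz⟩ := D.fw_coroot_int D.theta_mem r
      have hza : a r = (z : ℝ) := hz
      have h1 : (1:ℤ) ≤ z := by
        have := ha1 r; rw [hza] at this; exact_mod_cast this
      have h2 : z < 2 := by
        rw [hza] at har2; exact_mod_cast har2
      have : z = 1 := by omega
      rw [hza, this]; norm_num
    have hones : ∀ i, i ≠ r → m i = 1 := by
      intro i hi
      by_contra hne
      have h2 : 2 ≤ m i := by have := hm1 i; omega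
      have h2' : (2:ℝ) ≤ (m i : ℝ) := by exact_mod_cast h2
      have hti : 1 ≤ t i := by
        have := ha1 i
        calc (1:ℝ) = 1 * 1 := by ring
          _ ≤ ((m i : ℝ) - 1) * a i := by nlinarith
          _ = t i := rfl
      have htr1 : 1 ≤ t r := by
        rw [htdef]; simp only; rw [hmr2', har1]; norm_num
      have hsub : t r + t i ≤ ∑ j, t j := by
        have hsubset := Finset.sum_le_sum_of_subset_of_nonneg
          (Finset.subset_univ ({r, i} : Finset (Fin n))) (fun j _ _ => ht0 j)
        rwa [Finset.sum_pair (Ne.symm hi)] at hsubset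
      linarith
    refine ⟨r, ?_, ?_⟩
    · intro α hα
      have h5 := D.fw_coroot_le_theta r (D.pos_sub hα)
      have h6 : (⟪D.fw r, coroot D.hst⟫ : ℝ) = 1 := har1
      linarith
    · rw [hm, RootSystemData.rho]
      have hterm : ∀ i, (m i : ℝ) • D.fw i = D.fw i + (if i = r then D.fw r else 0) := by
        intro i
        by_cases hi : i = r
        · subst hi
          rw [hmr2', if_pos rfl, two_smul]
        · rw [hones i hi, if_neg hi, add_zero]
          simp
      rw [Finset.sum_congr rfl (fun i _ => hterm i), Finset.sum_add_distrib,
        Finset.sum_ite_eq' Finset.univ r (fun _ => D.fw r)]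
      simp
end
end

section
/- Every simple A_n(F_p)-module on which each of the generators x_1,…,x_n, y_1,…,y_n acts nilpotently is isomorphic to M = F_p[x_1,…,x_n]/(x_1^p,…,x_n^p), with x_i acting by multiplication and y_i by the partial derivative ∂/∂x_i. In particular, such a module has dimension p^n over F_p. -/
noncomputable section

namespace Stmt11

/-- The generator `x_i` of the free algebra on `x_1,…,x_n,y_1,…,y_n` over `𝔽_p`. -/
abbrev xg (p n : ℕ) (i : Fin n) : FreeAlgebra (ZMod p) (Fin n ⊕ Fin n) :=
  FreeAlgebra.ι (ZMod p) (Sum.inl i)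

/-- The generator `y_i` of the free algebra on `x_1,…,x_n,y_1,…,y_n` over `𝔽_p`. -/
abbrev yg (p n : ℕ) (i : Fin n) : FreeAlgebra (ZMod p) (Fin n ⊕ Fin n) :=
  FreeAlgebra.ι (ZMod p) (Sum.inr i)

/-- The defining relations of the Weyl algebra `A_n(𝔽_p)`. -/
inductive Rel (p n : ℕ) :
    FreeAlgebra (ZMod p) (Fin n ⊕ Fin n) → FreeAlgebra (ZMod p) (Fin n ⊕ Fin n) → Prop
  | xx (i j : Fin n) : Rel p n (xg p n i * xg p n j) (xg p n j * xg p n i)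
  | yy (i j : Fin n) : Rel p n (yg p n i * yg p n j) (yg p n j * yg p n i)
  | yx (i j : Fin n) :
      Rel p n (yg p n i * xg p n j - xg p n j * yg p n i) (if i = j then 1 else 0)

/-- The Weyl algebra `A_n(𝔽_p)`. -/
abbrev WeylAlg (p n : ℕ) := RingQuot (Rel p n)

/-- `M = 𝔽_p[x_1,…,x_n]/(x_1^p,…,x_n^p)`. -/
abbrev M (p n : ℕ) :=
  MvPolynomial (Fin n) (ZMod p) ⧸
    Ideal.span (Set.range fun i : Fin n => (MvPolynomial.X i : MvPolynomial (Fin n) (ZMod p)) ^ p)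

/-- The `A_n(𝔽_p)`-module structure on `M` induced by an algebra homomorphism
`φ : A_n(𝔽_p) → End_{𝔽_p}(M)`. -/
def AMod (p n : ℕ) (φ : WeylAlg p n →ₐ[ZMod p] Module.End (ZMod p) (M p n)) :
    Module (WeylAlg p n) (M p n) :=
  Module.compHom _ φ.toRingHom

/-!
The operators `x_i ^ p` and `y_j` commute, because `∂_j (x_i ^ p) = p x_i ^ (p - 1) ∂_j x_i = 0`
in characteristic `p`, and they act locally nilpotently; hence they have a common null vector
`v ≠ 0` in `V`. Since `y_i f(x) = f(x) y_i + (∂_i f)(x)`, the map `f ↦ f(x) • v` descends to `M`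
and intertwines the two actions. It is onto because `V` is simple, and one-to-one because a
nonzero polynomial whose exponents are all `< p` can be differentiated down to a nonzero
constant, which does not kill `v`. Finally, the monomials with exponents `< p` form a basis of `M`.
-/

open MvPolynomial

section CommonZero

variable {A V : Type*} [Monoid A] [AddMonoid V] [DistribMulAction A V]

theorem exists_pow_smul_ne_zero_and_smul_eq_zero {a : A} {v : V} {k : ℕ} (hv : v ≠ 0)
    (hk : a ^ k • v = 0) : ∃ m, a ^ m • v ≠ 0 ∧ a • a ^ m • v = 0 := by
  induction k generalizing v with
  | zero => simp_all
  | succ k ih =>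
    by_cases hav : a • v = 0
    · exact ⟨0, by simpa using hv, by simpa using hav⟩
    · obtain ⟨m, hm⟩ := ih hav (by rwa [← mul_smul, ← pow_succ])
      exact ⟨m + 1, by simpa [pow_succ, mul_smul] using hm⟩

theorem exists_ne_zero_forall_smul_eq_zero [Nontrivial V] {ι : Type*} (a : ι → A)
    (hcomm : ∀ i j, Commute (a i) (a j)) (hnil : ∀ i (v : V), ∃ k, a i ^ k • v = 0)
    (s : Finset ι) : ∃ v : V, v ≠ 0 ∧ ∀ i ∈ s, a i • v = 0 := by
  classical
  induction s using Finset.induction_on with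
  | empty => simpa using exists_ne (0 : V)
  | insert j s _ ih =>
    obtain ⟨v, hv, hsv⟩ := ih
    obtain ⟨k, hk⟩ := hnil j v
    obtain ⟨m, hm, hjm⟩ := exists_pow_smul_ne_zero_and_smul_eq_zero hv hk
    refine ⟨a j ^ m • v, hm, (Finset.forall_mem_insert _ _ _).2 ⟨hjm, fun i hi => ?_⟩⟩
    rw [smul_smul, ((hcomm i j).pow_right m).eq, mul_smul, hsv i hi, smul_zero]

end CommonZero

section Truncation

variable {σ R : Type*} [CommRing R]

theorem restrictScalars_span_X_pow (k : ℕ) :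
    (Ideal.span (Set.range fun i : σ => (X i : MvPolynomial σ R) ^ k)).restrictScalars R =
      restrictSupport R {d | ∃ i, k ≤ d i} := by
  have hgen : Set.range (fun i : σ => (X i : MvPolynomial σ R) ^ k) =
      (monomial · 1) '' Set.range fun i => Finsupp.single i k := by
    rw [← Set.range_comp]
    simp [Function.comp_def, X_pow_eq_monomial]
  ext f
  rw [Submodule.restrictScalars_mem, hgen, mem_ideal_span_monomial_image,
    mem_restrictSupport_iff]
  simp [Set.subset_def, Finsupp.single_le_iff]

theorem isCompl_restrictSupport_compl (s : Set (σ →₀ ℕ)) :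
    IsCompl (restrictSupport R s) (restrictSupport R sᶜ) :=
  ⟨Submodule.disjoint_def.2 fun f hs hc => support_eq_empty.1 <| Finset.coe_eq_empty.1 <|
      Set.subset_empty_iff.1 fun _ hm => hc hm (hs hm),
    codisjoint_iff.2 <| by
      rw [restrictSupport_eq_span, restrictSupport_eq_span, ← Submodule.span_union,
        ← Set.image_union, Set.union_compl_self, ← restrictSupport_eq_span,
        restrictSupport_univ]⟩

theorem isCompl_span_X_pow (k : ℕ) :
    IsCompl ((Ideal.span (Set.range fun i : σ => (X i : MvPolynomial σ R) ^ k)).restrictScalars R)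
      (restrictSupport R {d | ∀ i, d i < k}) := by
  rw [restrictScalars_span_X_pow]
  convert (isCompl_restrictSupport_compl (R := R) {d : σ →₀ ℕ | ∀ i, d i < k}).symm
  ext d
  simp

variable (σ R) in
def quotSpanXPowEquiv (k : ℕ) :
    (MvPolynomial σ R ⧸ Ideal.span (Set.range fun i : σ => (X i : MvPolynomial σ R) ^ k)) ≃ₗ[R]
      restrictSupport R {d : σ →₀ ℕ | ∀ i, d i < k} :=
  (Submodule.Quotient.restrictScalarsEquiv R _).symm ≪≫ₗ
    Submodule.quotientEquivOfIsCompl _ _ (isCompl_span_X_pow k)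

theorem quotSpanXPowEquiv_symm_apply (k : ℕ) (f : restrictSupport R {d : σ →₀ ℕ | ∀ i, d i < k}) :
    (quotSpanXPowEquiv σ R k).symm f = Ideal.Quotient.mk _ (f : MvPolynomial σ R) :=
  rfl

theorem finrank_quotient_span_X_pow [Fintype σ] [Nontrivial R] (k : ℕ) :
    Module.finrank R
        (MvPolynomial σ R ⧸ Ideal.span (Set.range fun i : σ => (X i : MvPolynomial σ R) ^ k)) =
      k ^ Fintype.card σ := by
  let exps : {d : σ →₀ ℕ | ∀ i, d i < k} ≃ (σ → Fin k) :=
    { toFun := fun d i => ⟨d.1 i, d.2 i⟩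
      invFun := fun g => ⟨Finsupp.equivFunOnFinite.symm fun i => g i, fun i => (g i).2⟩
      left_inv := fun d => by ext; simp
      right_inv := fun g => by ext; simp }
  rw [(quotSpanXPowEquiv σ R k).finrank_eq,
    Module.finrank_eq_nat_card_basis (basisRestrictSupport R _), Nat.card_congr exps,
    Nat.card_fun, Nat.card_eq_fintype_card, Fintype.card_fin, Nat.card_eq_fintype_card]

end Truncation

section PDeriv

variable {σ R : Type*} [CommSemiring R]

theorem totalDegree_pderiv_lt {i : σ} {f : MvPolynomial σ R} (h : pderiv i f ≠ 0) :
    (pderiv i f).totalDegree < f.totalDegree := by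
  obtain ⟨m, hm, hdeg⟩ :=
    Finset.exists_mem_eq_sup _ (support_nonempty.2 h) fun s : σ →₀ ℕ => s.sum fun _ e => e
  have hmi : m + Finsupp.single i 1 ∈ f.support := by
    rw [mem_support_iff, coeff_pderiv] at hm
    exact mem_support_iff.2 (left_ne_zero_of_mul hm)
  have := le_totalDegree hmi
  rw [Finsupp.sum_add_index' (fun _ => rfl) fun _ _ _ => rfl, Finsupp.sum_single_index rfl] at this
  rw [totalDegree, hdeg]
  omega

theorem pderiv_mem_restrictSupport {s : Set (σ →₀ ℕ)} (hs : IsLowerSet s) (i : σ)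
    {f : MvPolynomial σ R} (hf : f ∈ restrictSupport R s) : pderiv i f ∈ restrictSupport R s := by
  rw [mem_restrictSupport_iff] at hf ⊢
  intro m hm
  rw [Finset.mem_coe, mem_support_iff, coeff_pderiv] at hm
  exact hs le_self_add (hf (mem_support_iff.2 (left_ne_zero_of_mul hm)))

theorem isLowerSet_forall_lt (k : ℕ) : IsLowerSet {d : σ →₀ ℕ | ∀ i, d i < k} :=
  fun _ _ hle hd i => (hle i).trans_lt (hd i)

theorem exists_pderiv_ne_zero [IsDomain R] {k : ℕ} [CharP R k] {f : MvPolynomial σ R}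
    (hf : f ∈ restrictSupport R {d | ∀ i, d i < k}) (hC : f ≠ C (f.coeff 0)) :
    ∃ i, pderiv i f ≠ 0 := by
  classical
  obtain ⟨b, hb, hb0⟩ : ∃ b, f.coeff b ≠ 0 ∧ b ≠ 0 := by
    by_contra! h
    refine hC (ext _ _ fun b => ?_)
    rw [coeff_C]
    split_ifs with hb
    · rw [hb]
    · exact not_not.1 (mt (h b) (Ne.symm hb))
  obtain ⟨i, hi : b i ≠ 0⟩ := Finsupp.ne_iff.1 hb0
  refine ⟨i, fun h => ?_⟩
  have hbk : b i < k := hf (mem_support_iff.2 hb) i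
  have hcast : ((b i : ℕ) : R) ≠ 0 := by
    rw [Ne, CharP.cast_eq_zero_iff R k]
    exact fun hdvd => hi (Nat.eq_zero_of_dvd_of_lt hdvd hbk)
  have hsub : b - Finsupp.single i 1 + Finsupp.single i 1 = b :=
    tsub_add_cancel_of_le (Finsupp.single_le_iff.2 (Nat.one_le_iff_ne_zero.2 hi))
  have hbi : (b - Finsupp.single i 1 : σ →₀ ℕ) i + 1 = b i := by
    simp only [Finsupp.tsub_apply, Finsupp.single_eq_same]
    omega
  have := congrArg (coeff (b - Finsupp.single i 1)) h
  rw [coeff_pderiv, hsub, coeff_zero, ← Nat.cast_add_one, hbi] at this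
  exact mul_ne_zero hb hcast this

theorem one_mem_of_forall_pderiv_mem {K : Type*} [Field K] {k : ℕ} [CharP K k]
    {W : Submodule K (MvPolynomial σ K)} (hW : ∀ i, ∀ f ∈ W, pderiv i f ∈ W)
    {f : MvPolynomial σ K} (hfW : f ∈ W) (hf : f ∈ restrictSupport K {d | ∀ i, d i < k})
    (hf0 : f ≠ 0) : (1 : MvPolynomial σ K) ∈ W := by
  induction hd : f.totalDegree using Nat.strong_induction_on generalizing f with
  | _ d ih =>
  by_cases hC : f = C (f.coeff 0)
  · set c := f.coeff 0
    have hc : c ≠ 0 := fun h0 => hf0 (by rw [hC, h0, C_0])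
    rw [hC] at hfW
    simpa [smul_eq_C_mul, ← C_mul, hc] using W.smul_mem c⁻¹ hfW
  · obtain ⟨i, hi⟩ := exists_pderiv_ne_zero hf hC
    exact ih _ (hd ▸ totalDegree_pderiv_lt hi) (hW i f hfW)
      (pderiv_mem_restrictSupport (isLowerSet_forall_lt k) i hf) hi rfl

end PDeriv

section AevalOfCommute

variable {σ R A : Type*} [CommSemiring R] [Semiring A] [Algebra R A]

open scoped IsMulCommutative in
def aevalOfCommute (x : σ → A) (hx : ∀ i j, Commute (x i) (x j)) : MvPolynomial σ R →ₐ[R] A :=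
  haveI := Algebra.isMulCommutative_adjoin R (s := Set.range x) <| by
    rintro _ ⟨i, rfl⟩ _ ⟨j, rfl⟩
    exact hx i j
  (Algebra.adjoin R (Set.range x)).val.comp
    (aeval fun i => ⟨x i, Algebra.subset_adjoin ⟨i, rfl⟩⟩)

@[simp]
theorem aevalOfCommute_X (x : σ → A) (hx : ∀ i j, Commute (x i) (x j)) (i : σ) :
    aevalOfCommute (R := R) x hx (X i) = x i := by
  simp [aevalOfCommute]

end AevalOfCommute

theorem map_apply_eq_smul_of_generators {R X A N V : Type*} [CommRing R] [Ring A] [Algebra R A]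
    [AddCommGroup N] [Module R N] [AddCommGroup V] [Module A V] [Module R V]
    [IsScalarTower R A V] {q : FreeAlgebra R X →ₐ[R] A} (hq : Function.Surjective q)
    (ρ : A →ₐ[R] Module.End R N) (θ : N →ₗ[R] V)
    (hθ : ∀ x m, θ (ρ (q (FreeAlgebra.ι R x)) m) = q (FreeAlgebra.ι R x) • θ m)
    (a : A) (m : N) : θ (ρ a m) = a • θ m := by
  obtain ⟨b, rfl⟩ := hq a
  induction b using FreeAlgebra.induction generalizing m with
  | grade0 r => simp [algebraMap_smul]
  | grade1 x => exact hθ x m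
  | mul a b ha hb => rw [map_mul, map_mul, Module.End.mul_apply, ha, hb, mul_smul]
  | add a b ha hb => rw [map_add, map_add, LinearMap.add_apply, map_add, ha, hb, add_smul]

section Weyl

variable {p n : ℕ}

abbrev weylX (p n : ℕ) (i : Fin n) : WeylAlg p n :=
  RingQuot.mkAlgHom (ZMod p) (Rel p n) (xg p n i)

abbrev weylY (p n : ℕ) (i : Fin n) : WeylAlg p n :=
  RingQuot.mkAlgHom (ZMod p) (Rel p n) (yg p n i)

theorem weylX_commute (i j : Fin n) : Commute (weylX p n i) (weylX p n j) := by
  have h := RingQuot.mkAlgHom_rel (ZMod p) (Rel.xx (p := p) i j)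
  rwa [map_mul, map_mul] at h

theorem weylY_commute (i j : Fin n) : Commute (weylY p n i) (weylY p n j) := by
  have h := RingQuot.mkAlgHom_rel (ZMod p) (Rel.yy (p := p) i j)
  rwa [map_mul, map_mul] at h

theorem weylY_mul_weylX (i j : Fin n) :
    weylY p n i * weylX p n j = weylX p n j * weylY p n i + if i = j then 1 else 0 := by
  have h := RingQuot.mkAlgHom_rel (ZMod p) (Rel.yx (p := p) i j)
  rw [map_sub, map_mul, map_mul, apply_ite (RingQuot.mkAlgHom (ZMod p) (Rel p n)), map_one,
    map_zero] at h
  rw [← h, add_sub_cancel]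

variable (p n) in
def polyToWeyl : MvPolynomial (Fin n) (ZMod p) →ₐ[ZMod p] WeylAlg p n :=
  aevalOfCommute (weylX p n) weylX_commute

@[simp]
theorem polyToWeyl_X (i : Fin n) : polyToWeyl p n (X i) = weylX p n i :=
  aevalOfCommute_X _ _ i

theorem weylY_mul_polyToWeyl (i : Fin n) (f : MvPolynomial (Fin n) (ZMod p)) :
    weylY p n i * polyToWeyl p n f =
      polyToWeyl p n f * weylY p n i + polyToWeyl p n (pderiv i f) := by
  induction f using MvPolynomial.induction_on with
  | C a => simp [Algebra.commutes]
  | add f g hf hg =>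
    simp only [map_add, mul_add, add_mul, hf, hg]
    abel
  | mul_X f j hf =>
    rw [map_mul, polyToWeyl_X, ← mul_assoc, hf, add_mul, mul_assoc, weylY_mul_weylX, mul_add,
      pderiv_mul, map_add, map_mul, map_mul, polyToWeyl_X]
    by_cases hij : i = j
    · subst hij
      simp only [pderiv_X_self, map_one, mul_one, if_true]
      noncomm_ring
    · simp [pderiv_X_of_ne (Ne.symm hij), hij, mul_assoc]

theorem weylX_pow_commute_weylY (i j : Fin n) : Commute (weylX p n i ^ p) (weylY p n j) := by
  have h := weylY_mul_polyToWeyl j ((X i : MvPolynomial (Fin n) (ZMod p)) ^ p)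
  simp only [pderiv_pow, CharP.cast_eq_zero, zero_mul, map_zero, add_zero, map_pow,
    polyToWeyl_X] at h
  exact h.symm

end Weyl

section Vacuum

variable {p n : ℕ} {V : Type*} [AddCommGroup V] [Module (WeylAlg p n) V]

theorem exists_weyl_vacuum [Nontrivial V] (hp : 0 < p)
    (hnilx : ∀ i, ∃ k, ∀ v : V, weylX p n i ^ k • v = 0)
    (hnily : ∀ i, ∃ k, ∀ v : V, weylY p n i ^ k • v = 0) :
    ∃ v : V, v ≠ 0 ∧ (∀ i, weylX p n i ^ p • v = 0) ∧ ∀ i, weylY p n i • v = 0 := by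
  let a : Fin n ⊕ Fin n → WeylAlg p n := Sum.elim (fun i => weylX p n i ^ p) (weylY p n)
  have hcomm : ∀ i j, Commute (a i) (a j) := by
    rintro (i | i) (j | j)
    exacts [(weylX_commute i j).pow_pow p p, weylX_pow_commute_weylY i j,
      (weylX_pow_commute_weylY j i).symm, weylY_commute i j]
  have hnil : ∀ i (v : V), ∃ k, a i ^ k • v = 0 := by
    rintro (i | i) v
    · obtain ⟨k, hk⟩ := hnilx i
      refine ⟨k, ?_⟩
      have hsplit : (weylX p n i ^ k) ^ p = (weylX p n i ^ k) ^ (p - 1) * weylX p n i ^ k := by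
        rw [← pow_succ, Nat.sub_add_cancel hp]
      change (weylX p n i ^ p) ^ k • v = 0
      rw [← pow_mul, mul_comm, pow_mul, hsplit, mul_smul, hk, smul_zero]
    · obtain ⟨k, hk⟩ := hnily i
      exact ⟨k, hk v⟩
  obtain ⟨v, hv, hav⟩ := exists_ne_zero_forall_smul_eq_zero a hcomm hnil Finset.univ
  exact ⟨v, hv, fun i => hav (.inl i) (Finset.mem_univ _),
    fun i => hav (.inr i) (Finset.mem_univ _)⟩

variable [Module (ZMod p) V] [IsScalarTower (ZMod p) (WeylAlg p n) V]

def evalSmul (v : V) (hxv : ∀ i, weylX p n i ^ p • v = 0) : M p n →ₗ[ZMod p] V :=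
  let θ := (LinearMap.toSpanSingleton (WeylAlg p n) V v).restrictScalars (ZMod p) ∘ₗ
    (polyToWeyl p n).toLinearMap
  have hle : Ideal.span (Set.range fun i : Fin n => (X i : MvPolynomial (Fin n) (ZMod p)) ^ p) ≤
      Ideal.comap (polyToWeyl p n) (LinearMap.ker (LinearMap.toSpanSingleton (WeylAlg p n) V v)) :=
    Ideal.span_le.2 <| by
      rintro _ ⟨i, rfl⟩
      simpa using hxv i
  Submodule.liftQ _ θ hle ∘ₗ (Submodule.Quotient.restrictScalarsEquiv (ZMod p) _).symm.toLinearMap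

variable {v : V} {hxv : ∀ i, weylX p n i ^ p • v = 0}

theorem evalSmul_mk (f : MvPolynomial (Fin n) (ZMod p)) :
    evalSmul v hxv (Ideal.Quotient.mk _ f) = polyToWeyl p n f • v := by
  simp only [evalSmul, LinearMap.comp_apply, LinearEquiv.coe_toLinearMap,
    ← Ideal.Quotient.mk_eq_mk, Submodule.Quotient.restrictScalarsEquiv_symm_mk]
  rfl

theorem evalSmul_one : evalSmul v hxv 1 = v := by
  rw [← map_one (Ideal.Quotient.mk _), evalSmul_mk, map_one, one_smul]

theorem evalSmul_mk_pderiv (hyv : ∀ i, weylY p n i • v = 0) (i : Fin n)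
    (f : MvPolynomial (Fin n) (ZMod p)) :
    evalSmul v hxv (Ideal.Quotient.mk _ (pderiv i f)) =
      weylY p n i • evalSmul v hxv (Ideal.Quotient.mk _ f) := by
  rw [evalSmul_mk, evalSmul_mk, ← mul_smul, weylY_mul_polyToWeyl, add_smul, mul_smul, hyv,
    smul_zero, zero_add]

theorem evalSmul_map_apply (φ : WeylAlg p n →ₐ[ZMod p] Module.End (ZMod p) (M p n))
    (hφx : ∀ (i : Fin n) (f : MvPolynomial (Fin n) (ZMod p)),
      φ (weylX p n i) (Ideal.Quotient.mk _ f) = Ideal.Quotient.mk _ (X i * f))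
    (hφy : ∀ (i : Fin n) (f : MvPolynomial (Fin n) (ZMod p)),
      φ (weylY p n i) (Ideal.Quotient.mk _ f) = Ideal.Quotient.mk _ (pderiv i f))
    (hyv : ∀ i, weylY p n i • v = 0) (a : WeylAlg p n) (m : M p n) :
    evalSmul v hxv (φ a m) = a • evalSmul v hxv m := by
  refine map_apply_eq_smul_of_generators (RingQuot.mkAlgHom_surjective _ _) φ _ ?_ a m
  rintro (i | i) m
  all_goals obtain ⟨f, rfl⟩ := Ideal.Quotient.mk_surjective m
  · rw [hφx, evalSmul_mk, evalSmul_mk, map_mul, polyToWeyl_X, mul_smul]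
  · rw [hφy, evalSmul_mk_pderiv hyv]

theorem evalSmul_injective [Fact p.Prime] (hyv : ∀ i, weylY p n i • v = 0) (hv : v ≠ 0) :
    Function.Injective (evalSmul v hxv) := by
  rw [← LinearMap.ker_eq_bot, Submodule.eq_bot_iff]
  intro m hm
  let e := quotSpanXPowEquiv (Fin n) (ZMod p) p
  obtain ⟨⟨f, hf⟩, rfl⟩ := e.symm.surjective m
  rw [quotSpanXPowEquiv_symm_apply] at hm ⊢
  suffices f = 0 by simp [this]
  by_contra hf0
  let W := LinearMap.ker (evalSmul v hxv ∘ₗ (Ideal.Quotient.mkₐ (ZMod p) _).toLinearMap)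
  have hW : ∀ i, ∀ g ∈ W, pderiv i g ∈ W := fun i g hg => by
    simp_all [W, evalSmul_mk_pderiv hyv]
  have h1 : (1 : MvPolynomial (Fin n) (ZMod p)) ∈ W := one_mem_of_forall_pderiv_mem hW hm hf hf0
  simp only [W, LinearMap.mem_ker, LinearMap.comp_apply, AlgHom.toLinearMap_apply, map_one,
    evalSmul_one] at h1
  exact hv h1

end Vacuum

/-- let `φ` exhibit the standard action of `A_n(𝔽_p)` on
`M = 𝔽_p[x]/(x_i^p)` (`x_i` by multiplication, `y_i` by `∂/∂x_i`).  Every simple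
`A_n(𝔽_p)`-module `V` on which each generator `x_i, y_i` acts nilpotently is isomorphic
to `M`; in particular its dimension over `𝔽_p` is `p^n`. -/
theorem stmt_11 (p n : ℕ) (hp : p.Prime)
    (φ : WeylAlg p n →ₐ[ZMod p] Module.End (ZMod p) (M p n))
    (hφx : ∀ (i : Fin n) (f : MvPolynomial (Fin n) (ZMod p)),
      φ (RingQuot.mkAlgHom (ZMod p) (Rel p n) (xg p n i)) (Ideal.Quotient.mk _ f) =
        Ideal.Quotient.mk _ (MvPolynomial.X i * f))
    (hφy : ∀ (i : Fin n) (f : MvPolynomial (Fin n) (ZMod p)),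
      φ (RingQuot.mkAlgHom (ZMod p) (Rel p n) (yg p n i)) (Ideal.Quotient.mk _ f) =
        Ideal.Quotient.mk _ (MvPolynomial.pderiv i f))
    (V : Type) [AddCommGroup V] [Module (WeylAlg p n) V]
    [Module (ZMod p) V] [IsScalarTower (ZMod p) (WeylAlg p n) V]
    [IsSimpleModule (WeylAlg p n) V]
    (hnilx : ∀ i : Fin n, ∃ k : ℕ, ∀ v : V,
      (RingQuot.mkAlgHom (ZMod p) (Rel p n) (xg p n i)) ^ k • v = 0)
    (hnily : ∀ i : Fin n, ∃ k : ℕ, ∀ v : V,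
      (RingQuot.mkAlgHom (ZMod p) (Rel p n) (yg p n i)) ^ k • v = 0) :
    Nonempty (@LinearEquiv (WeylAlg p n) (WeylAlg p n) _ _ (RingHom.id _) (RingHom.id _)
        _ _ V (M p n) _ _ _ (AMod p n φ)) ∧
      Module.finrank (ZMod p) V = p ^ n := by
  have : Fact p.Prime := ⟨hp⟩
  have : Nontrivial V := IsSimpleModule.nontrivial (WeylAlg p n) V
  obtain ⟨v, hv, hxv, hyv⟩ := exists_weyl_vacuum hp.pos hnilx hnily
  let _ := AMod p n φ
  let θ : M p n →ₗ[WeylAlg p n] V :=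
    { evalSmul v hxv with map_smul' := evalSmul_map_apply φ hφx hφy hyv }
  have hθ : Function.Bijective θ := by
    refine ⟨evalSmul_injective (hxv := hxv) hyv hv,
      θ.surjective_or_eq_zero.resolve_right fun h => hv ?_⟩
    rw [← evalSmul_one (hxv := hxv)]
    exact LinearMap.congr_fun h 1
  refine ⟨⟨(LinearEquiv.ofBijective θ hθ).symm⟩, ?_⟩
  rw [← (LinearEquiv.ofBijective (evalSmul v hxv) hθ).finrank_eq, finrank_quotient_span_X_pow,
    Fintype.card_fin]

end Stmt11
end
end

section
/- There is a unique automorphism ε̂ of the universal double affine braid group 𝔅̂ satisfying ε̂(X_b) = Y_b and ε̂(Y_b) = X_b for all b ∈ P, ε̂(T̂_i) = T̂_i^{−1} for 0 ≤ i ≤ n, ε̂(π̂_r) = π̂_r for r ∈ O, and ε̂(q^{1/(2m)}) = q^{−1/(2m)}; moreover ε̂ is an involution, ε̂² = id. -/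
noncomputable section

open scoped RealInnerProductSpace BigOperators

/-! ## The affine combinatorics and the universal double affine braid group -/

/-- The affine simple roots `α_0 = [−θ, 1]`, `α_i = [α_i, 0]`, as pairs
(linear part, constant part). -/
def asimple {n : ℕ} (D : RootSystemData n) (i : Fin (n + 1)) : Vn n × ℝ :=
  Fin.cases (-D.hst, 1) (fun j => (D.sroot j, 0)) i

/-- The affine root `[α, k]` viewed as the affine function `x ↦ (α, x) + k`. -/
def afun {n : ℕ} (a : Vn n × ℝ) : Vn n → ℝ := fun x => ⟪a.1, x⟫ + a.2

/-- The affine reflection `s_{[α,k]} : x ↦ x − ((α,x)+k)·α^∨` corresponding to the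
`i`-th affine simple root, as a self-map of `V`. -/
def saff {n : ℕ} (D : RootSystemData n) (i : Fin (n + 1)) : Function.End (Vn n) :=
  fun x => x - afun (asimple D i) x • coroot (asimple D i).1

/-- The Coxeter matrix `m_{ij}` of the affine Weyl group: the order of `s_i s_j`. -/
def mAff {n : ℕ} (D : RootSystemData n) (i j : Fin (n + 1)) : ℕ :=
  orderOf (saff D i * saff D j)

/-- The index set `O' ⊆ {1,…,n}`: indices of minuscule fundamental weights (these are
exactly the nonzero images of `0` under automorphisms of the completed Dynkin diagram,
i.e. `Π ∖ {id}`). -/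
def MinIdx {n : ℕ} (D : RootSystemData n) := { r : Fin n // D.Minuscule r }

/-- The element `π_r = ω_r·u_r^{-1} ∈ Π` (`r ∈ O`, with `π_0 = id`) acting on `V` as an
affine transformation, `x ↦ u_r^{-1}(x) + ω_r`; here `u_r` is supplied as a parameter. -/
def pifun {n : ℕ} (D : RootSystemData n)
    (u : MinIdx D → (Vn n ≃ₗ[ℝ] Vn n)) : Option (MinIdx D) → Vn n → Vn n
  | none => fun x => x
  | some r => fun x => (u r)⁻¹ x + D.fw r.1

/-- The inverse affine transformation of `pifun`. -/
def pifuninv {n : ℕ} (D : RootSystemData n)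
    (u : MinIdx D → (Vn n ≃ₗ[ℝ] Vn n)) : Option (MinIdx D) → Vn n → Vn n
  | none => fun x => x
  | some r => fun x => u r (x - D.fw r.1)

/-- The generators of the universal double affine braid group `𝔅̂`:
`X_b, Y_b (b ∈ P)`, `T̂_0,…,T̂_n`, `π̂_r (r ∈ O = O' ∪ {0} )`, and the central
`q^{1/(2m)}` (named `q` below). -/
inductive DGen (n : ℕ) (D : RootSystemData n) : Type
  | X : ↥D.P → DGen n D
  | Y : ↥D.P → DGen n D
  | T : Fin (n + 1) → DGen n D
  | pi : Option (MinIdx D) → DGen n D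
  | q : DGen n D

/-- The alternating word `a·b·a·⋯` with `k` factors. -/
def altWord {G : Type} [Monoid G] (a b : G) : ℕ → G
  | 0 => 1
  | k + 1 => a * altWord b a k

/-- The pairing `(b, α_i^∨)` with the `i`-th affine simple coroot, with the convention
`(b, α_0^∨) = −(b, θ^∨)`. -/
def cpr {n : ℕ} (D : RootSystemData n) (i : Fin (n + 1)) (b : ↥D.P) : ℝ :=
  Fin.cases (-(⟪(b : Vn n), coroot D.hst⟫))
    (fun j => ⟪(b : Vn n), coroot (D.sroot j)⟫) i

/-- `X_{α_i}` in the free group on the generators, with the convention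
`X_{α_0} = q·X_θ^{-1}` (and `q = (q^{1/(2m)})^{2m}`). -/
def XA {n : ℕ} (D : RootSystemData n) (θP : ↥D.P) (srP : Fin n → ↥D.P) (m : ℕ)
    (i : Fin (n + 1)) : FreeGroup (DGen n D) :=
  Fin.cases ((FreeGroup.of (DGen.q : DGen n D)) ^ (2 * m) * (FreeGroup.of (DGen.X θP))⁻¹)
    (fun j => FreeGroup.of (DGen.X (srP j))) i

/-- `Y_{α_i}` in the free group on the generators, with the convention
`Y_{α_0} = q^{-1}·Y_θ^{-1}`. -/
def YA {n : ℕ} (D : RootSystemData n) (θP : ↥D.P) (srP : Fin n → ↥D.P) (m : ℕ)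
    (i : Fin (n + 1)) : FreeGroup (DGen n D) :=
  Fin.cases (((FreeGroup.of (DGen.q : DGen n D)) ^ (2 * m))⁻¹ * (FreeGroup.of (DGen.Y θP))⁻¹)
    (fun j => FreeGroup.of (DGen.Y (srP j))) i

/-- The defining relations (a)–(d) of the universal double affine braid group `𝔅̂`
(elements of the free group that are set equal to `1`):
(0) `X_bX_c = X_{b+c}`, `Y_bY_c = Y_{b+c}`, and `q^{1/(2m)}` is central;
(a) the braid relations `T̂_iT̂_jT̂_i⋯ = T̂_jT̂_iT̂_j⋯` (`m_{ij}` factors on each side) and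
    `π̂_r T̂_i π̂_r^{-1} = T̂_j` whenever `π_r(α_i) = α_j`;
    `π̂` multiply as the corresponding affine transformations do (`Π̂ ≅ Π`);
(b) `T̂_iX_bT̂_i = X_bX_{α_i}^{-1}` and `T̂_i^{-1}Y_bT̂_i^{-1} = Y_bY_{α_i}^{-1}`
    whenever `(b, α_i^∨) = 1`;
(c) `T̂_iX_b = X_bT̂_i` and `T̂_iY_b = Y_bT̂_i` whenever `(b, α_i^∨) = 0`;
(d) `π̂_rX_b π̂_r^{-1} = X_{u_r^{-1}(b)}·q^{(ω_{r^*},b)}` and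
    `π̂_rY_b π̂_r^{-1} = Y_{u_r^{-1}(b)}·q^{-(ω_{r^*},b)}` for `r ∈ O'`. -/
inductive DRel {n : ℕ} (D : RootSystemData n) (θP : ↥D.P) (srP : Fin n → ↥D.P)
    (u : MinIdx D → (Vn n ≃ₗ[ℝ] Vn n)) (uP : MinIdx D → (↥D.P ≃+ ↥D.P))
    (star : MinIdx D → MinIdx D) (m : ℕ) : FreeGroup (DGen n D) → Prop
  | Xadd (b c : ↥D.P) : DRel D θP srP u uP star m
      (.of (.X b) * .of (.X c) * (.of (.X (b + c)))⁻¹)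
  | Yadd (b c : ↥D.P) : DRel D θP srP u uP star m
      (.of (.Y b) * .of (.Y c) * (.of (.Y (b + c)))⁻¹)
  | qcentral (g : DGen n D) : DRel D θP srP u uP star m
      (.of .q * .of g * (.of .q)⁻¹ * (.of g)⁻¹)
  | braid (i j : Fin (n + 1)) : DRel D θP srP u uP star m
      (altWord (.of (.T i)) (.of (.T j)) (mAff D i j) *
        (altWord (.of (.T j)) (.of (.T i)) (mAff D i j))⁻¹)
  | pibraid (r : Option (MinIdx D)) (i j : Fin (n + 1))
      (hc : ∀ x, afun (asimple D j) x = afun (asimple D i) (pifuninv D u r x)) :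
      DRel D θP srP u uP star m
        (.of (.pi r) * .of (.T i) * (.of (.pi r))⁻¹ * (.of (.T j))⁻¹)
  | pimul (r r' r'' : Option (MinIdx D))
      (hc : ∀ x, pifun D u r (pifun D u r' x) = pifun D u r'' x) :
      DRel D θP srP u uP star m (.of (.pi r) * .of (.pi r') * (.of (.pi r''))⁻¹)
  | pid (r : Option (MinIdx D)) (hc : ∀ x, pifun D u r x = x) :
      DRel D θP srP u uP star m (.of (.pi r))
  | TXone (i : Fin (n + 1)) (b : ↥D.P) (h : cpr D i b = 1) :
      DRel D θP srP u uP star m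
        (.of (.T i) * .of (.X b) * .of (.T i) *
          (.of (.X b) * (XA D θP srP m i)⁻¹)⁻¹)
  | TYone (i : Fin (n + 1)) (b : ↥D.P) (h : cpr D i b = 1) :
      DRel D θP srP u uP star m
        ((.of (.T i))⁻¹ * .of (.Y b) * (.of (.T i))⁻¹ *
          (.of (.Y b) * (YA D θP srP m i)⁻¹)⁻¹)
  | TXzero (i : Fin (n + 1)) (b : ↥D.P) (h : cpr D i b = 0) :
      DRel D θP srP u uP star m
        (.of (.T i) * .of (.X b) * (.of (.T i))⁻¹ * (.of (.X b))⁻¹)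
  | TYzero (i : Fin (n + 1)) (b : ↥D.P) (h : cpr D i b = 0) :
      DRel D θP srP u uP star m
        (.of (.T i) * .of (.Y b) * (.of (.T i))⁻¹ * (.of (.Y b))⁻¹)
  | piX (r : MinIdx D) (b : ↥D.P) (z : ℤ)
      (hz : (z : ℝ) = 2 * m * ⟪D.fw (star r).1, (b : Vn n)⟫) :
      DRel D θP srP u uP star m
        (.of (.pi (some r)) * .of (.X b) * (.of (.pi (some r)))⁻¹ *
          (.of (.X ((uP r).symm b)) * (.of .q) ^ z)⁻¹)
  | piY (r : MinIdx D) (b : ↥D.P) (z : ℤ)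
      (hz : (z : ℝ) = 2 * m * ⟪D.fw (star r).1, (b : Vn n)⟫) :
      DRel D θP srP u uP star m
        (.of (.pi (some r)) * .of (.Y b) * (.of (.pi (some r)))⁻¹ *
          (.of (.Y ((uP r).symm b)) * ((.of .q) ^ z)⁻¹)⁻¹)

/-- The universal double affine braid group `𝔅̂`, presented by the generators `DGen`
and the relations `DRel`. -/
abbrev UnivDABG {n : ℕ} (D : RootSystemData n) (θP : ↥D.P) (srP : Fin n → ↥D.P)
    (u : MinIdx D → (Vn n ≃ₗ[ℝ] Vn n)) (uP : MinIdx D → (↥D.P ≃+ ↥D.P))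
    (star : MinIdx D → MinIdx D) (m : ℕ) :=
  PresentedGroup { g | DRel D θP srP u uP star m g }

/-- `EpsSpec ψ`: `ψ` acts on the generators of `𝔅̂` by `X_b ↔ Y_b`, `T̂_i ↦ T̂_i^{-1}`,
`π̂_r ↦ π̂_r`, `q^{1/(2m)} ↦ q^{-1/(2m)}`. -/
def EpsSpec {n : ℕ} (D : RootSystemData n) (θP : ↥D.P) (srP : Fin n → ↥D.P)
    (u : MinIdx D → (Vn n ≃ₗ[ℝ] Vn n)) (uP : MinIdx D → (↥D.P ≃+ ↥D.P))
    (star : MinIdx D → MinIdx D) (m : ℕ)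
    (ψ : UnivDABG D θP srP u uP star m ≃* UnivDABG D θP srP u uP star m) : Prop :=
  (∀ b : ↥D.P, ψ (PresentedGroup.of (DGen.X b)) = PresentedGroup.of (DGen.Y b)) ∧
  (∀ b : ↥D.P, ψ (PresentedGroup.of (DGen.Y b)) = PresentedGroup.of (DGen.X b)) ∧
  (∀ i : Fin (n + 1), ψ (PresentedGroup.of (DGen.T i)) = (PresentedGroup.of (DGen.T i))⁻¹) ∧
  (∀ r : Option (MinIdx D), ψ (PresentedGroup.of (DGen.pi r)) = PresentedGroup.of (DGen.pi r)) ∧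
  ψ (PresentedGroup.of (DGen.q : DGen n D)) = (PresentedGroup.of (DGen.q : DGen n D))⁻¹

/-! ## Auxiliary lemmas for statement 12 -/

private lemma altWord_succ_right {G : Type} [Monoid G] (a b : G) (k : ℕ) :
    altWord a b (k + 1) = altWord a b k * (if Even k then a else b) := by
  induction k generalizing a b with
  | zero => simp [altWord]
  | succ k ih =>
    have h1 : altWord a b (k + 1 + 1) = a * altWord b a (k + 1) := rfl
    have h2 : altWord a b (k + 1) = a * altWord b a k := rfl
    rw [h1, ih b a, h2, mul_assoc]
    by_cases h : Even k <;> simp [h, Nat.even_add_one]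

private lemma altWord_inv {G : Type} [Group G] (a b : G) (k : ℕ) :
    (altWord a b k)⁻¹ = if Even k then altWord b⁻¹ a⁻¹ k else altWord a⁻¹ b⁻¹ k := by
  induction k generalizing a b with
  | zero => simp [altWord]
  | succ k ih =>
    have h2 : altWord a b (k + 1) = a * altWord b a k := rfl
    rw [h2, mul_inv_rev, ih b a,
        altWord_succ_right a⁻¹ b⁻¹ k, altWord_succ_right b⁻¹ a⁻¹ k]
    by_cases h : Even k <;> simp [h, Nat.even_add_one]

private lemma map_altWord {G H : Type} [Monoid G] [Monoid H] (φ : G →* H) (a b : G) (k : ℕ) :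
    φ (altWord a b k) = altWord (φ a) (φ b) k := by
  induction k generalizing a b with
  | zero => simp [altWord]
  | succ k ih =>
    have h : altWord a b (k + 1) = a * altWord b a k := rfl
    have h' : altWord (φ a) (φ b) (k + 1) = φ a * altWord (φ b) (φ a) k := rfl
    rw [h, h', map_mul, ih]

/-- The image of the generators of `𝔅̂` under the candidate automorphism `ε̂`. -/
def epsGen {n : ℕ} {D : RootSystemData n} (rels : Set (FreeGroup (DGen n D))) :
    DGen n D → PresentedGroup rels
  | .X b => .of (.Y b)
  | .Y b => .of (.X b)
  | .T i => (.of (.T i))⁻¹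
  | .pi r => .of (.pi r)
  | .q => (.of .q)⁻¹

/-- All defining relations of `𝔅̂` are sent to `1` by `ε̂`. -/
lemma eps_rels {n : ℕ} (D : RootSystemData n) (θP : ↥D.P) (srP : Fin n → ↥D.P)
    (u : MinIdx D → (Vn n ≃ₗ[ℝ] Vn n)) (uP : MinIdx D → (↥D.P ≃+ ↥D.P))
    (star : MinIdx D → MinIdx D) (m : ℕ) :
    ∀ w ∈ { g | DRel D θP srP u uP star m g },
      FreeGroup.lift (epsGen { g | DRel D θP srP u uP star m g }) w = 1 := by
  set rels := { g | DRel D θP srP u uP star m g } with hrels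
  have rel1 : ∀ w, DRel D θP srP u uP star m w →
      PresentedGroup.mk rels w = 1 := fun w hw =>
    (QuotientGroup.eq_one_iff _).mpr (Subgroup.subset_normalClosure hw)
  have mk_of : ∀ x : DGen n D, PresentedGroup.mk rels (FreeGroup.of x) =
      PresentedGroup.of x := fun _ => rfl
  -- the images of XA and YA
  have liftXA : ∀ i, FreeGroup.lift (epsGen rels) (XA D θP srP m i) =
      PresentedGroup.mk rels (YA D θP srP m i) := by
    intro i
    induction i using Fin.cases with
    | zero => simp [XA, YA, epsGen, inv_pow, mk_of]
    | succ j => simp [XA, YA, epsGen, mk_of]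
  have liftYA : ∀ i, FreeGroup.lift (epsGen rels) (YA D θP srP m i) =
      PresentedGroup.mk rels (XA D θP srP m i) := by
    intro i
    induction i using Fin.cases with
    | zero => simp [XA, YA, epsGen, inv_pow, mk_of]
    | succ j => simp [XA, YA, epsGen, mk_of]
  -- q is central among the generators
  have hcq : ∀ g : DGen n D,
      Commute (PresentedGroup.of (rels := rels) DGen.q) (PresentedGroup.of g) := by
    intro g
    have h' := rel1 _ (DRel.qcentral g)
    simp only [map_mul, map_inv, mk_of] at h'
    rw [mul_inv_eq_one, mul_inv_eq_iff_eq_mul] at h'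
    exact h'
  intro w hw
  cases hw with
  | Xadd b c =>
    have h' := rel1 _ (DRel.Yadd b c)
    simp only [map_mul, map_inv, mk_of] at h'
    simpa only [map_mul, map_inv, FreeGroup.lift_apply_of, epsGen] using h'
  | Yadd b c =>
    have h' := rel1 _ (DRel.Xadd b c)
    simp only [map_mul, map_inv, mk_of] at h'
    simpa only [map_mul, map_inv, FreeGroup.lift_apply_of, epsGen] using h'
  | qcentral g =>
    have hcg : Commute (PresentedGroup.of (rels := rels) DGen.q) (epsGen rels g) := by
      cases g with
      | X b => exact hcq _
      | Y b => exact hcq _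
      | T i => exact (hcq (DGen.T i)).inv_right
      | pi r => exact hcq _
      | q => exact (hcq DGen.q).inv_right
    have eq_q : epsGen rels DGen.q = (PresentedGroup.of (rels := rels) DGen.q)⁻¹ := rfl
    simp only [map_mul, map_inv, FreeGroup.lift_apply_of, eq_q, inv_inv]
    rw [mul_assoc (PresentedGroup.of (rels := rels) DGen.q)⁻¹, ← hcg.eq]
    simp [mul_assoc]
  | braid i j =>
    have h' := rel1 _ (DRel.braid i j)
    simp only [map_mul, map_inv, map_altWord, mk_of] at h'
    rw [mul_inv_eq_one] at h'
    simp only [map_mul, map_inv, map_altWord, FreeGroup.lift_apply_of, epsGen]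
    rw [mul_inv_eq_one]
    set a := PresentedGroup.of (rels := rels) (DGen.T i)
    set b := PresentedGroup.of (rels := rels) (DGen.T j)
    set k := mAff D i j
    have h1 := altWord_inv a b k
    have h2 := altWord_inv b a k
    by_cases hk : Even k
    · rw [if_pos hk] at h1 h2
      rw [← h1, ← h2, h']
    · rw [if_neg hk] at h1 h2
      rw [← h1, ← h2, h']
  | pibraid r i j hc =>
    have h' := rel1 _ (DRel.pibraid r i j hc)
    simp only [map_mul, map_inv, mk_of] at h'
    rw [mul_inv_eq_one] at h'
    simp only [map_mul, map_inv, FreeGroup.lift_apply_of, epsGen, inv_inv]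
    have h3 : PresentedGroup.of (rels := rels) (DGen.pi r) *
        (PresentedGroup.of (DGen.T i))⁻¹ * (PresentedGroup.of (DGen.pi r))⁻¹ =
        (PresentedGroup.of (rels := rels) (DGen.T j))⁻¹ := by
      rw [← h']; group
    rw [h3, inv_mul_cancel]
  | pimul r r' r'' hc =>
    have h' := rel1 _ (DRel.pimul r r' r'' hc)
    simp only [map_mul, map_inv, mk_of] at h'
    simpa only [map_mul, map_inv, FreeGroup.lift_apply_of, epsGen] using h'
  | pid r hc =>
    have h' := rel1 _ (DRel.pid r hc)
    simp only [mk_of] at h'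
    simpa only [FreeGroup.lift_apply_of, epsGen] using h'
  | TXone i b h =>
    have h' := rel1 _ (DRel.TYone i b h)
    simp only [map_mul, map_inv, mk_of] at h'
    simp only [map_mul, map_inv, FreeGroup.lift_apply_of, epsGen, liftXA]
    exact h'
  | TYone i b h =>
    have h' := rel1 _ (DRel.TXone i b h)
    simp only [map_mul, map_inv, mk_of] at h'
    simp only [map_mul, map_inv, FreeGroup.lift_apply_of, epsGen, liftYA, inv_inv]
    exact h'
  | TXzero i b h =>
    have h' := rel1 _ (DRel.TYzero i b h)
    simp only [map_mul, map_inv, mk_of] at h'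
    rw [mul_inv_eq_one, mul_inv_eq_iff_eq_mul] at h'
    have hcom : Commute (PresentedGroup.of (rels := rels) (DGen.T i))
        (PresentedGroup.of (DGen.Y b)) := h'
    simp only [map_mul, map_inv, FreeGroup.lift_apply_of, epsGen, inv_inv]
    rw [mul_assoc (PresentedGroup.of (DGen.T i))⁻¹, ← hcom.eq, ← mul_assoc]
    simp
  | TYzero i b h =>
    have h' := rel1 _ (DRel.TXzero i b h)
    simp only [map_mul, map_inv, mk_of] at h'
    rw [mul_inv_eq_one, mul_inv_eq_iff_eq_mul] at h'
    have hcom : Commute (PresentedGroup.of (rels := rels) (DGen.T i))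
        (PresentedGroup.of (DGen.X b)) := h'
    simp only [map_mul, map_inv, FreeGroup.lift_apply_of, epsGen, inv_inv]
    rw [mul_assoc (PresentedGroup.of (DGen.T i))⁻¹, ← hcom.eq, ← mul_assoc]
    simp
  | piX r b z hz =>
    have h' := rel1 _ (DRel.piY r b z hz)
    simp only [map_mul, map_inv, map_zpow, mk_of] at h'
    simp only [map_mul, map_inv, map_zpow, FreeGroup.lift_apply_of, epsGen, inv_zpow]
    exact h'
  | piY r b z hz =>
    have h' := rel1 _ (DRel.piX r b z hz)
    simp only [map_mul, map_inv, map_zpow, mk_of] at h'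
    simp only [map_mul, map_inv, map_zpow, FreeGroup.lift_apply_of, epsGen, inv_zpow, inv_inv]
    exact h'

/-- there is a unique automorphism `ε̂` of the universal double affine
braid group `𝔅̂` with `ε̂(X_b) = Y_b`, `ε̂(Y_b) = X_b`, `ε̂(T̂_i) = T̂_i^{-1}`,
`ε̂(π̂_r) = π̂_r` and `ε̂(q^{1/(2m)}) = q^{-1/(2m)}`; moreover `ε̂` is an involution.

Here the data of the extended affine Weyl group is supplied concretely:  `θP`, `srP` are
`θ` and the simple roots viewed in the weight lattice `P`; `w0` is the longest element
of `W`, `w0r r` the longest element of the stabilizer of the minuscule weight `ω_r`, and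
`u_r = w0·w0r r` (with `uP r` its restriction to the lattice `P`); `star` is the
involution `r ↦ r^*` determined by `π_r^{-1} = π_{r^*}`; and `m` is the least positive
integer with `m(P,P) ⊆ ℤ`. -/
theorem stmt_12 {n : ℕ} (D : RootSystemData n)
    (θP : ↥D.P) (hθP : (θP : Vn n) = D.hst)
    (srP : Fin n → ↥D.P) (hsrP : ∀ i, ((srP i : Vn n)) = D.sroot i)
    (w0 : Vn n ≃ₗ[ℝ] Vn n) (hw0W : w0 ∈ D.Weyl)
    (hw0 : ∀ α ∈ D.Rplus, -(w0 α) ∈ D.Rplus)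
    (w0r : MinIdx D → (Vn n ≃ₗ[ℝ] Vn n))
    (hw0rW : ∀ r, w0r r ∈ D.Weyl)
    (hw0rfix : ∀ r : MinIdx D, w0r r (D.fw r.1) = D.fw r.1)
    (hw0rneg : ∀ r : MinIdx D, ∀ α ∈ D.Rplus, ⟪α, D.fw r.1⟫ = 0 → -(w0r r α) ∈ D.Rplus)
    (hw0rpos : ∀ r : MinIdx D, ∀ α ∈ D.Rplus, ⟪α, D.fw r.1⟫ ≠ 0 → w0r r α ∈ D.Rplus)
    (uP : MinIdx D → (↥D.P ≃+ ↥D.P))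
    (huP : ∀ (r : MinIdx D) (b : ↥D.P), ((uP r b : Vn n)) = (w0 * w0r r) (b : Vn n))
    (star : MinIdx D → MinIdx D)
    (hstar : ∀ (r : MinIdx D) (x : Vn n),
      pifun D (fun s => w0 * w0r s) (some (star r)) x =
        pifuninv D (fun s => w0 * w0r s) (some r) x)
    (m : ℕ) (hm0 : 0 < m)
    (hmint : ∀ b ∈ D.P, ∀ c ∈ D.P, ∃ z : ℤ, (m : ℝ) * ⟪b, c⟫ = (z : ℝ))
    (hmmin : ∀ m' : ℕ, 0 < m' →
      (∀ b ∈ D.P, ∀ c ∈ D.P, ∃ z : ℤ, (m' : ℝ) * ⟪b, c⟫ = (z : ℝ)) → m ≤ m') :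
    ∃ ε : UnivDABG D θP srP (fun s => w0 * w0r s) uP star m ≃*
        UnivDABG D θP srP (fun s => w0 * w0r s) uP star m,
      EpsSpec D θP srP (fun s => w0 * w0r s) uP star m ε ∧
      (∀ g, ε (ε g) = g) ∧
      ∀ ψ : UnivDABG D θP srP (fun s => w0 * w0r s) uP star m ≃*
          UnivDABG D θP srP (fun s => w0 * w0r s) uP star m,
        EpsSpec D θP srP (fun s => w0 * w0r s) uP star m ψ → ψ = ε := by
  classical
  have hr := eps_rels D θP srP (fun s => w0 * w0r s) uP star m
  set rels := { g | DRel D θP srP (fun s => w0 * w0r s) uP star m g } with hrels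
  -- the candidate homomorphism
  set E : UnivDABG D θP srP (fun s => w0 * w0r s) uP star m →*
      UnivDABG D θP srP (fun s => w0 * w0r s) uP star m :=
    PresentedGroup.toGroup hr with hEdef
  have hE : ∀ x : DGen n D, E (PresentedGroup.of x) = epsGen rels x := by
    intro x; rw [hEdef]; exact PresentedGroup.toGroup.of hr
  have hEE : ∀ x : DGen n D, E (E (PresentedGroup.of x)) = PresentedGroup.of x := by
    intro x
    cases x <;> simp only [hE, epsGen, map_inv, inv_inv]
  have hcomp : E.comp E = MonoidHom.id _ := by
    apply PresentedGroup.ext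
    intro x
    simpa using hEE x
  have hEEall : ∀ g, E (E g) = g := by
    intro g
    have := DFunLike.congr_fun hcomp g
    simpa using this
  refine ⟨{ toFun := E, invFun := E, left_inv := hEEall, right_inv := hEEall,
            map_mul' := map_mul E }, ⟨?_, ?_, ?_, ?_, ?_⟩, hEEall, ?_⟩
  · intro b; exact hE (DGen.X b)
  · intro b; exact hE (DGen.Y b)
  · intro i; exact hE (DGen.T i)
  · intro r; exact hE (DGen.pi r)
  · exact hE DGen.q
  · intro ψ hψ
    obtain ⟨h1, h2, h3, h4, h5⟩ := hψ
    have hψE : (ψ : UnivDABG D θP srP (fun s => w0 * w0r s) uP star m →*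
        UnivDABG D θP srP (fun s => w0 * w0r s) uP star m) = E := by
      apply PresentedGroup.ext
      intro x
      have : (ψ : UnivDABG D θP srP (fun s => w0 * w0r s) uP star m →*
          UnivDABG D θP srP (fun s => w0 * w0r s) uP star m) (PresentedGroup.of x) =
          ψ (PresentedGroup.of x) := rfl
      rw [this, hE]
      cases x with
      | X b => exact h1 b
      | Y b => exact h2 b
      | T i => exact h3 i
      | pi r => exact h4 r
      | q => exact h5
    ext g
    exact DFunLike.congr_fun hψE g
end
end
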